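/- arXiv:2502.10997 — 13 statements merged into one kernel-verified Lean document; each statement's English description precedes it below -/
import Mathlib

section
/- For every natural number n, every natural number k, and all real numbers p1, p2 with 0 ≤ p1 ≤ p2 ≤ 1, the binomial cumulative distribution function is pointwise nonincreasing in the success probability: ∑_{j=0}^{k} C(n,j)·p1^j·(1−p1)^{n−j} ≥ ∑_{j=0}^{k} C(n,j)·p2^j·(1−p2)^{n−j}. -/
/-! The CDF is a partial sum of Bernstein polynomials; by `bernsteinPolynomial.derivative_succ` its
derivative telescopes to `-n * b_{n-1,k}`, which is nonpositive on `[0, 1]`. -/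

open Finset Polynomial

namespace bernsteinPolynomial

theorem derivative_sum_range {R : Type*} [CommRing R] (n k : ℕ) :
    derivative (∑ ν ∈ range (k + 1), bernsteinPolynomial R n ν) =
      -n * bernsteinPolynomial R (n - 1) k := by
  induction k with
  | zero => simp [derivative_zero]
  | succ k ih =>
    rw [sum_range_succ, derivative_add, ih, derivative_succ]
    ring

theorem eval_nonneg {R : Type*} [CommRing R] [PartialOrder R] [IsStrictOrderedRing R]
    (n ν : ℕ) {x : R} (h0 : 0 ≤ x) (h1 : x ≤ 1) :
    0 ≤ (bernsteinPolynomial R n ν).eval x := by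
  simp only [bernsteinPolynomial, eval_mul, eval_pow, eval_natCast, eval_X, eval_sub, eval_one]
  have := sub_nonneg.2 h1
  positivity

theorem antitoneOn_eval_sum_range (n k : ℕ) :
    AntitoneOn (fun x : ℝ => (∑ ν ∈ range (k + 1), bernsteinPolynomial ℝ n ν).eval x)
      (Set.Icc 0 1) := by
  refine antitoneOn_of_deriv_nonpos (convex_Icc 0 1) (Polynomial.continuousOn _)
    (Polynomial.differentiableOn _) fun x hx => ?_
  rw [interior_Icc] at hx
  rw [Polynomial.deriv, derivative_sum_range, eval_mul, eval_neg, eval_natCast, neg_mul]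
  exact neg_nonpos.2 (mul_nonneg n.cast_nonneg (eval_nonneg _ _ hx.1.le hx.2.le))

end bernsteinPolynomial

/-- The binomial cumulative distribution function is pointwise nonincreasing
in the success probability. -/
theorem binomial_cdf_antitone_in_p (n k : ℕ) (p1 p2 : ℝ)
    (h1 : 0 ≤ p1) (h12 : p1 ≤ p2) (h2 : p2 ≤ 1) :
    ∑ j ∈ Finset.range (k + 1), (n.choose j : ℝ) * p1 ^ j * (1 - p1) ^ (n - j) ≥
      ∑ j ∈ Finset.range (k + 1), (n.choose j : ℝ) * p2 ^ j * (1 - p2) ^ (n - j) := by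
  have := bernsteinPolynomial.antitoneOn_eval_sum_range n k
    ⟨h1, h12.trans h2⟩ ⟨h1.trans h12, h2⟩ h12
  simpa [eval_finsetSum, bernsteinPolynomial] using this
end

section
/- Let N_1, …, N_K be independent real-valued random variables and let j1 ≠ j2 be two indices in {1,…,K} such that F_{N_{j1}}(x) ≤ F_{N_{j2}}(x) for all x ∈ ℝ. Then P[N_{j1} > max_{j ≠ j1} N_j] ≥ P[N_{j2} > max_{j ≠ j2} N_j]. -/
/-!
Condition on the value `x` of the candidate winner: `N b` beats all the others with probability
`∫ ∏_{j ≠ b} P[N j < x] d(law N b)(x)`. Passing from `b = j2` to `b = j1` happens in two steps.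
Inside the integrand, the factor `P[N j1 < x]` is replaced by the larger `P[N j2 < x]`; this
turns the integrand into `x ↦ P[max_{j ≠ j1} N j < x]`. Then the integrating law `law N j2` is
replaced by `law N j1`, which dominates it stochastically; by Fubini,
`∫ ν (Iio x) dρ(x) = ∫ ρ (Ioi y) dν(y)`, so such integrals are monotone in the upper tails of `ρ`.
-/

open MeasureTheory ProbabilityTheory Set

section Order

variable {α : Type*} [MeasurableSpace α]

theorem measure_Iio_le_of_forall_measure_Iic_le [ConditionallyCompleteLinearOrder α]
    [TopologicalSpace α] [OrderTopology α] [DenselyOrdered α] [NoMinOrder α]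
    [FirstCountableTopology α] {ν₁ ν₂ : Measure α} (h : ∀ x, ν₁ (Iic x) ≤ ν₂ (Iic x)) (t : α) :
    ν₁ (Iio t) ≤ ν₂ (Iio t) := by
  obtain ⟨u, hu_mono, hu_lt, hu_lim⟩ := exists_seq_strictMono_tendsto t
  have hmono : Monotone fun n => Iic (u n) := fun _ _ hmn =>
    Iic_subset_Iic.mpr (hu_mono.monotone hmn)
  rw [← iUnion_Iic_eq_Iio_of_lt_of_tendsto hu_lt hu_lim, hmono.measure_iUnion,
    hmono.measure_iUnion]
  exact iSup_mono fun n => h (u n)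

variable [LinearOrder α] [TopologicalSpace α] [OrderClosedTopology α] [OpensMeasurableSpace α]

theorem measure_Ioi_le_of_forall_measure_Iic_le {ν₁ ν₂ : Measure α} [IsProbabilityMeasure ν₁]
    [IsProbabilityMeasure ν₂] (h : ∀ x, ν₁ (Iic x) ≤ ν₂ (Iic x)) (t : α) :
    ν₂ (Ioi t) ≤ ν₁ (Ioi t) := by
  rw [← compl_Iic, prob_compl_eq_one_sub measurableSet_Iic, prob_compl_eq_one_sub measurableSet_Iic]
  exact tsub_le_tsub_left (h t) 1

variable [SecondCountableTopology α]

theorem lintegral_measure_Iio_eq_lintegral_measure_Ioi (ν ρ : Measure α) [SFinite ν] [SFinite ρ] :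
    ∫⁻ x, ν (Iio x) ∂ρ = ∫⁻ y, ρ (Ioi y) ∂ν :=
  (Measure.prod_apply_symm measurableSet_lt').symm.trans (Measure.prod_apply measurableSet_lt')

theorem lintegral_measure_Iio_mono_of_measure_Ioi_le (ν : Measure α) {ρ₁ ρ₂ : Measure α}
    [SFinite ν] [SFinite ρ₁] [SFinite ρ₂] (h : ∀ y, ρ₁ (Ioi y) ≤ ρ₂ (Ioi y)) :
    ∫⁻ x, ν (Iio x) ∂ρ₁ ≤ ∫⁻ x, ν (Iio x) ∂ρ₂ := by
  simp only [lintegral_measure_Iio_eq_lintegral_measure_Ioi ν]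
  exact lintegral_mono fun y => h y

theorem lintegral_measure_forall_mem_lt_mono_of_measure_Ioi_le {Ω ι : Type*} [MeasurableSpace Ω]
    [MeasurableSup₂ α] (μ : Measure Ω) [SFinite μ] {N : ι → Ω → α} (hN : ∀ j, Measurable (N j))
    {S : Finset ι} (hS : S.Nonempty) {ρ₁ ρ₂ : Measure α} [SFinite ρ₁] [SFinite ρ₂]
    (h : ∀ y, ρ₁ (Ioi y) ≤ ρ₂ (Ioi y)) :
    ∫⁻ x, μ {ω | ∀ j ∈ S, N j ω < x} ∂ρ₁ ≤ ∫⁻ x, μ {ω | ∀ j ∈ S, N j ω < x} ∂ρ₂ := by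
  have hmax : Measurable (S.sup' hS N) := Finset.measurable_sup' hS fun j _ => hN j
  have hset : ∀ x, μ {ω | ∀ j ∈ S, N j ω < x} = μ.map (S.sup' hS N) (Iio x) := fun x => by
    rw [Measure.map_apply hmax measurableSet_Iio]
    congr 1
    ext ω
    simp [Finset.sup'_apply, Finset.sup'_lt_iff]
  simp only [hset]
  exact lintegral_measure_Iio_mono_of_measure_Ioi_le _ h

end Order

theorem ProbabilityTheory.IndepFun.measure_preimage_prodMk {Ω β γ : Type*} [MeasurableSpace Ω]
    [MeasurableSpace β] [MeasurableSpace γ] {μ : Measure Ω} [IsFiniteMeasure μ] {X : Ω → β}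
    {Y : Ω → γ} (hXY : IndepFun X Y μ) (hX : Measurable X) (hY : Measurable Y)
    {E : Set (β × γ)} (hE : MeasurableSet E) :
    μ ((fun ω => (X ω, Y ω)) ⁻¹' E) = ∫⁻ x, μ (Y ⁻¹' (Prod.mk x ⁻¹' E)) ∂(μ.map X) := by
  rw [← Measure.map_apply (hX.prodMk hY) hE,
    (indepFun_iff_map_prod_eq_prod_map_map hX.aemeasurable hY.aemeasurable).mp hXY,
    Measure.prod_apply hE]
  exact lintegral_congr fun x => Measure.map_apply hY (measurable_prodMk_left hE)

namespace ProbabilityTheory.iIndepFun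

variable {Ω ι α : Type*} [MeasurableSpace Ω] {μ : Measure Ω} {N : ι → Ω → α} [LinearOrder α]
  [TopologicalSpace α] [OrderClosedTopology α] [MeasurableSpace α] [OpensMeasurableSpace α]

theorem measure_forall_mem_lt (hIndep : iIndepFun N μ) (hN : ∀ j, Measurable (N j))
    (S : Finset ι) (x : α) :
    μ {ω | ∀ j ∈ S, N j ω < x} = ∏ j ∈ S, μ.map (N j) (Iio x) := by
  have hset : {ω | ∀ j ∈ S, N j ω < x} = ⋂ j ∈ S, N j ⁻¹' Iio x := by ext; simp
  rw [hset, hIndep.meas_biInter fun j _ => ⟨Iio x, measurableSet_Iio, rfl⟩]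
  exact Finset.prod_congr rfl fun j _ => (Measure.map_apply (hN j) measurableSet_Iio).symm

variable [SecondCountableTopology α]

theorem measure_forall_ne_lt_eq_lintegral [Fintype ι] [DecidableEq ι] (hIndep : iIndepFun N μ)
    (hN : ∀ j, Measurable (N j)) (b : ι) :
    μ {ω | ∀ j, j ≠ b → N j ω < N b ω}
      = ∫⁻ x, μ {ω | ∀ j ∈ Finset.univ.erase b, N j ω < x} ∂(μ.map (N b)) := by
  have := hIndep.isProbabilityMeasure
  set T := Finset.univ.erase b
  have hIndepT : IndepFun (N b) (fun ω (j : T) => N j ω) μ :=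
    (hIndep.indepFun_finset {b} T (by simp [T]) hN).comp
      (measurable_pi_apply (⟨b, Finset.mem_singleton_self b⟩ : ({b} : Finset ι))) measurable_id
  have hE : MeasurableSet {p : α × (T → α) | ∀ j, p.2 j < p.1} := by
    simp only [ofPred_forall]
    exact MeasurableSet.iInter fun j => measurableSet_lt (by fun_prop) measurable_fst
  convert hIndepT.measure_preimage_prodMk (hN b) (measurable_pi_lambda _ fun j => hN j) hE using 1
  · congr 1
    ext ω
    simp [T]
  · congr 1
    ext x
    congr 1
    ext ω
    simp [T]

end ProbabilityTheory.iIndepFun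

theorem prob_argmax_mono_of_cdf_le_general {Ω : Type*} [MeasurableSpace Ω] (μ : Measure Ω)
    {K : ℕ} (N : Fin K → Ω → ℝ)
    (hN : ∀ j, Measurable (N j))
    (hIndep : iIndepFun N μ)
    (j1 j2 : Fin K) (hne : j1 ≠ j2)
    (hCDF : ∀ x : ℝ, μ {ω | N j1 ω ≤ x} ≤ μ {ω | N j2 ω ≤ x}) :
    μ {ω | ∀ j, j ≠ j1 → N j ω < N j1 ω} ≥ μ {ω | ∀ j, j ≠ j2 → N j ω < N j2 ω} := by
  have := hIndep.isProbabilityMeasure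
  have := Measure.isProbabilityMeasure_map (μ := μ) (hN j1).aemeasurable
  have := Measure.isProbabilityMeasure_map (μ := μ) (hN j2).aemeasurable
  have hIic : ∀ x, μ.map (N j1) (Iic x) ≤ μ.map (N j2) (Iic x) := fun x => by
    rw [Measure.map_apply (hN _) measurableSet_Iic, Measure.map_apply (hN _) measurableSet_Iic]
    exact hCDF x
  have hj2 : j2 ∈ Finset.univ.erase j1 := Finset.mem_erase.mpr ⟨hne.symm, Finset.mem_univ _⟩
  have hj1 : j1 ∈ Finset.univ.erase j2 := Finset.mem_erase.mpr ⟨hne, Finset.mem_univ _⟩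
  rw [ge_iff_le, hIndep.measure_forall_ne_lt_eq_lintegral hN,
    hIndep.measure_forall_ne_lt_eq_lintegral hN]
  calc ∫⁻ x, μ {ω | ∀ j ∈ Finset.univ.erase j2, N j ω < x} ∂μ.map (N j2)
      ≤ ∫⁻ x, μ {ω | ∀ j ∈ Finset.univ.erase j1, N j ω < x} ∂μ.map (N j2) := by
        refine lintegral_mono fun x => ?_
        rw [hIndep.measure_forall_mem_lt hN, hIndep.measure_forall_mem_lt hN,
          ← Finset.mul_prod_erase _ _ hj1, ← Finset.mul_prod_erase _ _ hj2, Finset.erase_right_comm]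
        gcongr ?_ * _
        exact measure_Iio_le_of_forall_measure_Iic_le hIic x
    _ ≤ ∫⁻ x, μ {ω | ∀ j ∈ Finset.univ.erase j1, N j ω < x} ∂μ.map (N j1) :=
        lintegral_measure_forall_mem_lt_mono_of_measure_Ioi_le μ hN ⟨j2, hj2⟩
          (measure_Ioi_le_of_forall_measure_Iic_le hIic)

/-- For independent random variables `N 1, ..., N K`, if the CDF of `N j1` is pointwise at most
the CDF of `N j2`, then `N j1` is more likely than `N j2` to strictly exceed all other variables. -/
theorem prob_argmax_mono_of_cdf_le {Ω : Type*} [MeasurableSpace Ω] (μ : Measure Ω)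
    [IsProbabilityMeasure μ] {K : ℕ} (N : Fin K → Ω → ℝ)
    (hN : ∀ j, Measurable (N j))
    (hIndep : iIndepFun N μ)
    (j1 j2 : Fin K) (hne : j1 ≠ j2)
    (hCDF : ∀ x : ℝ, μ {ω | N j1 ω ≤ x} ≤ μ {ω | N j2 ω ≤ x}) :
    μ {ω | ∀ j, j ≠ j1 → N j ω < N j1 ω} ≥ μ {ω | ∀ j, j ≠ j2 → N j ω < N j2 ω} :=
  prob_argmax_mono_of_cdf_le_general μ N hN hIndep j1 j2 hne hCDF
end

section
/- Let n ≥ 1, let μ_1, …, μ_K ∈ [0,1], let G_1, …, G_K be independent random variables with G_j distributed as Binomial(n, μ_j), let Q_1, …, Q_K be i.i.d. real-valued random variables with common distribution ν, and suppose the family (G_1,…,G_K,Q_1,…,Q_K) is mutually independent. Then: (i) for any indices j1, j2 with μ_{j1} ≤ μ_{j2}, P[−G_{j1}+Q_{j1} > max_{j ≠ j1}(−G_j+Q_j)] ≥ P[−G_{j2}+Q_{j2} > max_{j ≠ j2}(−G_j+Q_j)]; (ii) if additionally μ_1 ≤ μ_2 ≤ ⋯ ≤ μ_K, then for every j, P[−G_j+Q_j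 > max_{i ≠ j}(−G_i+Q_i)] ≤ 1/j. -/
/-!
Write `V j = -G j + Q j`. The `V j` are independent, and conditioning on the value `x` of `V a`
gives `P[a wins] = ∫ ∏_{j ≠ a} P[V j < x] dP_{V a}(x)`. If `μ_a ≤ μ_b`, then `Bin(n, μ_a)` is
stochastically smaller than `Bin(n, μ_b)` (thin a `Bin(n, μ_b)` variable with probability
`μ_a / μ_b`), so the law of `V a` dominates that of `V b`. Moving from `b` to `a` therefore
integrates a monotone integrand against a larger law and replaces the factor `P[V a < x]` by the
larger `P[V b < x]`. For the `1/j` bound, the winning events are disjoint and, when the means are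
sorted, each of the first `j` actions wins at least as often as the `j`-th.
-/

open MeasureTheory ProbabilityTheory
open scoped ENNReal

/-- The binomial distribution with `n` trials and success probability `p`, as a measure on `ℝ`
supported on `{0, 1, ..., n}`. -/
noncomputable def binomialMeasureReal (n : ℕ) (p : ℝ) : Measure ℝ :=
  ∑ k ∈ Finset.range (n + 1),
    (ENNReal.ofReal ((n.choose k : ℝ) * p ^ k * (1 - p) ^ (n - k))) • Measure.dirac (k : ℝ)

open Finset Set Function

namespace ProbabilityTheory

lemma iIndepFun.prodMk_of_sumElim {Ω ι β : Type*} [MeasurableSpace Ω] {μ : Measure Ω}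
    [Fintype ι] [MeasurableSpace β] {f g : ι → Ω → β}
    (hf : ∀ i, Measurable (f i)) (hg : ∀ i, Measurable (g i)) (h : iIndepFun (Sum.elim f g) μ) :
    iIndepFun (fun i ω ↦ (f i ω, g i ω)) μ := by
  have := h.isProbabilityMeasure
  have hfg : ∀ k, Measurable (Sum.elim f g k) := Sum.rec hf hg
  rw [iIndepFun_iff_map_fun_eq_pi_map fun i ↦ ((hf i).prodMk (hg i)).aemeasurable]
  have hpair : ∀ i, μ.map (fun ω ↦ (f i ω, g i ω)) = (μ.map (f i)).prod (μ.map (g i)) := fun i ↦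
    (indepFun_iff_map_prod_eq_prod_map_map (hf i).aemeasurable (hg i).aemeasurable).1
      (h.indepFun Sum.inl_ne_inr)
  have hcomp : (fun ω i ↦ (f i ω, g i ω)) = (MeasurableEquiv.arrowProdEquivProdArrow β β ι).symm ∘
      MeasurableEquiv.sumPiEquivProdPi (fun _ ↦ β) ∘ fun ω k ↦ Sum.elim f g k ω := rfl
  rw [hcomp, ← Measure.map_map (by fun_prop) (by fun_prop),
    ← Measure.map_map (by fun_prop) (measurable_pi_lambda _ hfg),
    h.map_fun_eq_pi_map fun k ↦ (hfg k).aemeasurable,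
    (measurePreserving_sumPiEquivProdPi _).map_eq,
    ← (measurePreserving_arrowProdEquivProdArrow β β ι _ _).map_eq, MeasurableEquiv.map_symm_map]
  simp_rw [hpair]
  rfl

end ProbabilityTheory

def StochasticallyLE (α β : Measure ℝ) : Prop :=
  ∀ f : ℝ → ℝ≥0∞, Measurable f → Monotone f → ∫⁻ x, f x ∂α ≤ ∫⁻ x, f x ∂β

lemma StochasticallyLE.measure_Iio_le {α β : Measure ℝ} [IsProbabilityMeasure α]
    [IsProbabilityMeasure β] (h : StochasticallyLE α β) (x : ℝ) : β (Iio x) ≤ α (Iio x) := by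
  have hIci : α (Ici x) ≤ β (Ici x) := by
    simpa [lintegral_indicator measurableSet_Ici] using
      h ((Ici x).indicator 1) (measurable_one.indicator measurableSet_Ici)
        fun y z hyz ↦ by
          by_cases hy : x ≤ y
          · simp [indicator, hy, hy.trans hyz]
          · simp [indicator, hy]
  rw [← compl_Ici, prob_compl_eq_one_sub measurableSet_Ici, prob_compl_eq_one_sub measurableSet_Ici]
  exact tsub_le_tsub_left hIci 1

lemma pairwise_disjoint_setOf_forall_ne_lt {Ω ι : Type*} (V : ι → Ω → ℝ) :
    Pairwise (Disjoint on fun a ↦ {ω | ∀ j, j ≠ a → V j ω < V a ω}) :=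
  fun a b hab ↦ Set.disjoint_left.2 fun _ ha hb ↦ lt_asymm (ha b hab.symm) (hb a hab)

section NoisyMax

variable {Ω ι : Type*} [MeasurableSpace Ω] {μ : Measure Ω} [Fintype ι] [DecidableEq ι]
  {V : ι → Ω → ℝ}

lemma measure_forall_ne_lt_eq_lintegral (hV : ∀ i, Measurable (V i)) (hind : iIndepFun V μ)
    (a : ι) :
    μ {ω | ∀ j, j ≠ a → V j ω < V a ω} =
      ∫⁻ x, ∏ j ∈ univ.erase a, μ.map (V j) (Iio x) ∂μ.map (V a) := by
  have := hind.isProbabilityMeasure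
  set W : Ω → univ.erase a → ℝ := fun ω j ↦ V j ω
  have hW : Measurable W := by fun_prop
  have hindW : IndepFun (V a) W μ :=
    (hind.indepFun_finset {a} (univ.erase a) (by simp) hV).comp
      (measurable_pi_apply (⟨a, mem_singleton_self a⟩ : ({a} : Finset ι))) measurable_id
  have hS : MeasurableSet {z : ℝ × (univ.erase a → ℝ) | ∀ j, z.2 j < z.1} := by
    measurability
  have hevent : {ω | ∀ j, j ≠ a → V j ω < V a ω} =
      (fun ω ↦ (V a ω, W ω)) ⁻¹' {z | ∀ j, z.2 j < z.1} := by
    ext ω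
    simp [W]
  rw [hevent, ← Measure.map_apply ((hV a).prodMk hW) hS,
    (indepFun_iff_map_prod_eq_prod_map_map (hV a).aemeasurable hW.aemeasurable).1 hindW,
    Measure.prod_apply hS]
  refine lintegral_congr fun x ↦ ?_
  have hslice : W ⁻¹' (Prod.mk x ⁻¹' {z | ∀ j, z.2 j < z.1}) =
      ⋂ j ∈ univ.erase a, V j ⁻¹' Iio x := by
    ext ω
    simp [W]
  rw [Measure.map_apply hW (by measurability), hslice,
    hind.meas_biInter fun j _ ↦ ⟨Iio x, measurableSet_Iio, rfl⟩]
  exact prod_congr rfl fun j _ ↦ (Measure.map_apply (hV j) measurableSet_Iio).symm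

lemma measure_forall_ne_lt_le_of_stochasticallyLE (hV : ∀ i, Measurable (V i))
    (hind : iIndepFun V μ) {a b : ι} (hab : StochasticallyLE (μ.map (V b)) (μ.map (V a))) :
    μ {ω | ∀ j, j ≠ b → V j ω < V b ω} ≤ μ {ω | ∀ j, j ≠ a → V j ω < V a ω} := by
  obtain rfl | hne := eq_or_ne a b
  · exact le_rfl
  have := hind.isProbabilityMeasure
  have := Measure.isProbabilityMeasure_map (μ := μ) (hV a).aemeasurable
  have := Measure.isProbabilityMeasure_map (μ := μ) (hV b).aemeasurable
  rw [measure_forall_ne_lt_eq_lintegral hV hind a, measure_forall_ne_lt_eq_lintegral hV hind b]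
  set F : ι → ℝ → ℝ≥0∞ := fun j x ↦ μ.map (V j) (Iio x)
  set D : ℝ → ℝ≥0∞ := fun x ↦ ∏ j ∈ (univ.erase a).erase b, F j x
  have hF : ∀ j, Monotone (F j) := fun j x y hxy ↦ measure_mono (Iio_subset_Iio hxy)
  have hD : Monotone D := fun x y hxy ↦ prod_le_prod' fun j _ ↦ hF j hxy
  have hsplit_a : ∀ x, ∏ j ∈ univ.erase a, F j x = F b x * D x := fun x ↦
    (mul_prod_erase _ _ (mem_erase.2 ⟨hne.symm, mem_univ b⟩)).symm
  have hsplit_b : ∀ x, ∏ j ∈ univ.erase b, F j x = F a x * D x := fun x ↦ by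
    rw [← mul_prod_erase _ _ (mem_erase.2 ⟨hne, mem_univ a⟩), erase_right_comm]
  calc ∫⁻ x, ∏ j ∈ univ.erase b, F j x ∂μ.map (V b)
      = ∫⁻ x, F a x * D x ∂μ.map (V b) := lintegral_congr hsplit_b
    _ ≤ ∫⁻ x, F a x * D x ∂μ.map (V a) :=
        hab _ ((hF a).measurable.mul hD.measurable) ((hF a).mul' hD)
    _ ≤ ∫⁻ x, F b x * D x ∂μ.map (V a) :=
        lintegral_mono fun x ↦ mul_le_mul_left (hab.measure_Iio_le x) _
    _ = ∫⁻ x, ∏ j ∈ univ.erase a, F j x ∂μ.map (V a) := (lintegral_congr hsplit_a).symm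

end NoisyMax

lemma measure_le_inv_succ_of_antitone {Ω : Type*} [MeasurableSpace Ω] {μ : Measure Ω}
    [IsProbabilityMeasure μ] {K : ℕ} {E : Fin K → Set Ω} (hE : ∀ i, MeasurableSet (E i))
    (hdisj : Pairwise (Disjoint on E)) (hanti : Antitone fun i ↦ μ (E i)) (j : Fin K) :
    μ (E j) ≤ (((j : ℕ) : ℝ≥0∞) + 1)⁻¹ := by
  rw [ENNReal.le_inv_iff_mul_le, mul_comm]
  calc (((j : ℕ) : ℝ≥0∞) + 1) * μ (E j) = ∑ _i ∈ Iic j, μ (E j) := by simp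
    _ ≤ ∑ i ∈ Iic j, μ (E i) := sum_le_sum fun i hi ↦ hanti (mem_Iic.1 hi)
    _ ≤ μ univ := sum_measure_le_measure_univ (fun i _ ↦ (hE i).nullMeasurableSet)
        fun i _ j _ hij ↦ (hdisj hij).aedisjoint
    _ = 1 := measure_univ

/-- The joint law of `(A, B)` where `B ~ Bin(n, q)` and, given `B`, `A ~ Bin(B, p / q)`:
a coupling of `Bin(n, p)` and `Bin(n, q)` supported on `A ≤ B`. -/
noncomputable def binomialCoupling (n : ℕ) (p q : ℝ) (a b : ℕ) : ℝ :=
  n.choose b * b.choose a * p ^ a * (q - p) ^ (b - a) * (1 - q) ^ (n - b)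

section Binomial

variable {n : ℕ} {p q : ℝ}

lemma binomialCoupling_nonneg (hp : 0 ≤ p) (hpq : p ≤ q) (hq : q ≤ 1) (a b : ℕ) :
    0 ≤ binomialCoupling n p q a b := by
  have : 0 ≤ q - p := sub_nonneg.2 hpq
  have : 0 ≤ 1 - q := sub_nonneg.2 hq
  unfold binomialCoupling
  positivity

lemma binomialCoupling_of_lt {a b : ℕ} (hba : b < a) : binomialCoupling n p q a b = 0 := by
  simp [binomialCoupling, Nat.choose_eq_zero_of_lt hba]

lemma binomialCoupling_marginal_snd {b : ℕ} (hb : b ≤ n) :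
    ∑ a ∈ range (n + 1), binomialCoupling n p q a b = n.choose b * q ^ b * (1 - q) ^ (n - b) := by
  rw [← sum_subset (range_subset_range.2 (Nat.succ_le_succ hb))
    fun a _ ha ↦ binomialCoupling_of_lt (by simpa using ha)]
  calc ∑ a ∈ range (b + 1), binomialCoupling n p q a b
      = n.choose b * (1 - q) ^ (n - b) *
          ∑ a ∈ range (b + 1), p ^ a * (q - p) ^ (b - a) * b.choose a := by
        rw [mul_sum]
        exact sum_congr rfl fun a _ ↦ by unfold binomialCoupling; ring
    _ = n.choose b * q ^ b * (1 - q) ^ (n - b) := by rw [← add_pow, add_sub_cancel]; ring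

lemma binomialCoupling_marginal_fst {a : ℕ} (ha : a ≤ n) :
    ∑ b ∈ range (n + 1), binomialCoupling n p q a b = n.choose a * p ^ a * (1 - p) ^ (n - a) := by
  obtain ⟨m, rfl⟩ := Nat.exists_eq_add_of_le ha
  rw [show a + m + 1 = a + (m + 1) by ring, sum_range_add,
    sum_eq_zero fun b hb ↦ binomialCoupling_of_lt (mem_range.1 hb), zero_add]
  calc ∑ t ∈ range (m + 1), binomialCoupling (a + m) p q a (a + t)
      = (a + m).choose a * p ^ a *
          ∑ t ∈ range (m + 1), (q - p) ^ t * (1 - q) ^ (m - t) * m.choose t := by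
        rw [mul_sum]
        refine sum_congr rfl fun t _ ↦ ?_
        have hchoose : ((a + m).choose (a + t) : ℝ) * (a + t).choose a =
            (a + m).choose a * m.choose t := mod_cast
          (Nat.choose_mul (Nat.le_add_right a t)).trans (by simp)
        unfold binomialCoupling
        rw [show a + m - (a + t) = m - t by omega, Nat.add_sub_cancel_left]
        linear_combination (p ^ a * (q - p) ^ t * (1 - q) ^ (m - t)) * hchoose
    _ = (a + m).choose a * p ^ a * (1 - p) ^ (a + m - a) := by
        rw [← add_pow, Nat.add_sub_cancel_left]; ring_nf

lemma lintegral_binomialMeasureReal (n : ℕ) (r : ℝ) (f : ℝ → ℝ≥0∞) :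
    ∫⁻ x, f x ∂binomialMeasureReal n r =
      ∑ k ∈ range (n + 1), ENNReal.ofReal (n.choose k * r ^ k * (1 - r) ^ (n - k)) * f k := by
  simp [binomialMeasureReal]

lemma lintegral_binomialMeasureReal_le_of_antitone (hp : 0 ≤ p) (hpq : p ≤ q) (hq : q ≤ 1)
    {f : ℝ → ℝ≥0∞} (hf : Antitone f) :
    ∫⁻ x, f x ∂binomialMeasureReal n q ≤ ∫⁻ x, f x ∂binomialMeasureReal n p := by
  have hc := binomialCoupling_nonneg (n := n) hp hpq hq
  simp only [lintegral_binomialMeasureReal]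
  calc ∑ b ∈ range (n + 1), ENNReal.ofReal (n.choose b * q ^ b * (1 - q) ^ (n - b)) * f b
      = ∑ b ∈ range (n + 1), ∑ a ∈ range (n + 1),
          ENNReal.ofReal (binomialCoupling n p q a b) * f b := by
        refine sum_congr rfl fun b hb ↦ ?_
        rw [← sum_mul, ← ENNReal.ofReal_sum_of_nonneg fun a _ ↦ hc a b,
          binomialCoupling_marginal_snd (Nat.lt_succ_iff.1 (mem_range.1 hb))]
    _ ≤ ∑ b ∈ range (n + 1), ∑ a ∈ range (n + 1),
          ENNReal.ofReal (binomialCoupling n p q a b) * f a := by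
        refine sum_le_sum fun b _ ↦ sum_le_sum fun a _ ↦ ?_
        rcases le_or_gt a b with hab | hba
        · exact mul_le_mul_right (hf (Nat.cast_le.2 hab)) _
        · simp [binomialCoupling_of_lt hba]
    _ = ∑ a ∈ range (n + 1), ENNReal.ofReal (n.choose a * p ^ a * (1 - p) ^ (n - a)) * f a := by
        rw [sum_comm]
        refine sum_congr rfl fun a ha ↦ ?_
        rw [← sum_mul, ← ENNReal.ofReal_sum_of_nonneg fun b _ ↦ hc a b,
          binomialCoupling_marginal_fst (Nat.lt_succ_iff.1 (mem_range.1 ha))]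

lemma stochasticallyLE_map_neg_add_binomial (ν : Measure ℝ) [SFinite ν] (hp : 0 ≤ p)
    (hpq : p ≤ q) (hq : q ≤ 1) :
    StochasticallyLE (((binomialMeasureReal n q).prod ν).map fun z ↦ -z.1 + z.2)
      (((binomialMeasureReal n p).prod ν).map fun z ↦ -z.1 + z.2) := by
  intro f hf hmono
  have hsub : Measurable fun z : ℝ × ℝ ↦ -z.1 + z.2 := by fun_prop
  have hfsub : Measurable fun z : ℝ × ℝ ↦ f (-z.1 + z.2) := hf.comp hsub
  rw [lintegral_map hf hsub, lintegral_map hf hsub, lintegral_prod _ hfsub.aemeasurable,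
    lintegral_prod _ hfsub.aemeasurable]
  exact lintegral_binomialMeasureReal_le_of_antitone hp hpq hq fun x y hxy ↦
    lintegral_mono fun z ↦ hmono (by linarith)

end Binomial

theorem reportNoisyMax_binomial_monotone_general {Ω : Type*} [MeasurableSpace Ω] (μ : Measure Ω)
    [IsProbabilityMeasure μ] {K : ℕ} (n : ℕ)
    (μs : Fin K → ℝ) (hμs : ∀ j, μs j ∈ Set.Icc (0 : ℝ) 1)
    (G Q : Fin K → Ω → ℝ)
    (hG : ∀ j, Measurable (G j)) (hQ : ∀ j, Measurable (Q j))
    (hGdist : ∀ j, Measure.map (G j) μ = binomialMeasureReal n (μs j))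
    (ν : Measure ℝ) [IsProbabilityMeasure ν]
    (hQdist : ∀ j, Measure.map (Q j) μ = ν)
    (hIndep : iIndepFun (Sum.elim G Q) μ) :
    (∀ j1 j2 : Fin K, μs j1 ≤ μs j2 →
        μ {ω | ∀ j, j ≠ j1 → -G j ω + Q j ω < -G j1 ω + Q j1 ω} ≥
          μ {ω | ∀ j, j ≠ j2 → -G j ω + Q j ω < -G j2 ω + Q j2 ω}) ∧
      (Monotone μs → ∀ j : Fin K,
        μ {ω | ∀ i, i ≠ j → -G i ω + Q i ω < -G j ω + Q j ω} ≤ (((j : ℕ) : ℝ≥0∞) + 1)⁻¹) := by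
  set V : Fin K → Ω → ℝ := fun j ω ↦ -G j ω + Q j ω
  have hV : ∀ j, Measurable (V j) := fun j ↦ (hG j).neg.add (hQ j)
  have hVind : iIndepFun V μ :=
    (hIndep.prodMk_of_sumElim hG hQ).comp (fun _ z ↦ -z.1 + z.2) fun _ ↦ by fun_prop
  have hVlaw : ∀ j, μ.map (V j) =
      ((binomialMeasureReal n (μs j)).prod ν).map fun z ↦ -z.1 + z.2 := fun j ↦ by
    rw [← hGdist j, ← hQdist j, ← (indepFun_iff_map_prod_eq_prod_map_map (hG j).aemeasurable
      (hQ j).aemeasurable).1 (hIndep.indepFun Sum.inl_ne_inr),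
      Measure.map_map (by fun_prop) ((hG j).prodMk (hQ j))]
    rfl
  have hmono_mean : ∀ j1 j2, μs j1 ≤ μs j2 → μ {ω | ∀ j, j ≠ j2 → V j ω < V j2 ω} ≤
      μ {ω | ∀ j, j ≠ j1 → V j ω < V j1 ω} := fun j1 j2 h ↦
    measure_forall_ne_lt_le_of_stochasticallyLE hV hVind <| by
      rw [hVlaw, hVlaw]
      exact stochasticallyLE_map_neg_add_binomial ν (hμs j1).1 h (hμs j2).2
  exact ⟨hmono_mean, fun hsorted j ↦ measure_le_inv_succ_of_antitone (fun i ↦ by measurability)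
    (pairwise_disjoint_setOf_forall_ne_lt V) (fun i j hij ↦ hmono_mean i j (hsorted hij)) j⟩

/-- Monotonicity of report-noisy-max on Bernoulli-resampled accumulated losses:
(i) an action with smaller mean loss is selected with larger probability;
(ii) if the means are sorted increasingly, the `j`-th action (1-based) is selected with
probability at most `1/j`. -/
theorem reportNoisyMax_binomial_monotone {Ω : Type*} [MeasurableSpace Ω] (μ : Measure Ω)
    [IsProbabilityMeasure μ] {K : ℕ} (n : ℕ) (hn : 1 ≤ n)
    (μs : Fin K → ℝ) (hμs : ∀ j, μs j ∈ Set.Icc (0 : ℝ) 1)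
    (G Q : Fin K → Ω → ℝ)
    (hG : ∀ j, Measurable (G j)) (hQ : ∀ j, Measurable (Q j))
    (hGdist : ∀ j, Measure.map (G j) μ = binomialMeasureReal n (μs j))
    (ν : Measure ℝ) [IsProbabilityMeasure ν]
    (hQdist : ∀ j, Measure.map (Q j) μ = ν)
    (hIndep : iIndepFun (Sum.elim G Q) μ) :
    (∀ j1 j2 : Fin K, μs j1 ≤ μs j2 →
        μ {ω | ∀ j, j ≠ j1 → -G j ω + Q j ω < -G j1 ω + Q j1 ω} ≥
          μ {ω | ∀ j, j ≠ j2 → -G j ω + Q j ω < -G j2 ω + Q j2 ω}) ∧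
      (Monotone μs → ∀ j : Fin K,
        μ {ω | ∀ i, i ≠ j → -G i ω + Q i ω < -G j ω + Q j ω} ≤ (((j : ℕ) : ℝ≥0∞) + 1)⁻¹) :=
  reportNoisyMax_binomial_monotone_general μ n μs hμs G Q hG hQ hGdist ν hQdist hIndep
end

section
/- Let n ≥ 1, ε > 0, and Δ > 0. Let X_1, …, X_n be i.i.d. random variables taking values in [0,1] with mean μ, let Y_1, …, Y_n be i.i.d. random variables taking values in [0,1] with mean μ + Δ, and let Q, Q' be i.i.d. random variables with the exponential distribution of rate ε; suppose all of these random variables are mutually independent. Set G = ∑_{i=1}^n X_i and G' = ∑_{i=1}^n Y_i. Then P[−G' + Q' > −G + Q] ≤ exp(−nΔ²/4) + exp(−ε·nΔ/2). -/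
open MeasureTheory ProbabilityTheory
open scoped ENNReal

/-! If `-G + Q < -G' + Q'` then, since `Q ≥ 0` almost surely, either the gap `G' - G`, whose mean
is `nΔ`, is at most `nΔ/2`, or `Q' > nΔ/2`. `G - G'` is a sum of `2n` independent summands with
ranges of width one, so Hoeffding's inequality bounds the first event by `exp(-nΔ²/4)`; the
exponential tail bounds the second by `exp(-εnΔ/2)`. -/

namespace ProbabilityTheory

variable {Ω ι : Type*} [MeasurableSpace Ω] {μ : Measure Ω}

theorem measureReal_sum_sub_integral_ge_le_of_iIndepFun_of_mem_Icc [IsProbabilityMeasure μ]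
    {X : ι → Ω → ℝ} (h_indep : iIndepFun X μ) {s : Finset ι} {a b : ι → ℝ}
    (hX : ∀ i ∈ s, AEMeasurable (X i) μ) (hab : ∀ i ∈ s, ∀ᵐ ω ∂μ, X i ω ∈ Set.Icc (a i) (b i))
    {t : ℝ} (ht : 0 ≤ t) :
    μ.real {ω | t ≤ ∑ i ∈ s, (X i ω - μ[X i])} ≤
      Real.exp (-2 * t ^ 2 / ∑ i ∈ s, (b i - a i) ^ 2) := by
  have h_centered : iIndepFun (fun i ω ↦ X i ω - μ[X i]) μ :=
    h_indep.comp (fun i y ↦ y - ∫ ω, X i ω ∂μ) fun i ↦ measurable_sub_const _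
  have h_bound := HasSubgaussianMGF.measure_sum_ge_le_of_iIndepFun h_centered
    (fun i hi ↦ hasSubgaussianMGF_of_mem_Icc (hX i hi) (hab i hi)) ht
  convert h_bound using 2
  push_cast
  simp only [Real.norm_eq_abs, sq_abs, div_pow, ← Finset.sum_div]
  ring

theorem expMeasure_Ioi {r x : ℝ} (hr : 0 < r) (hx : 0 ≤ x) :
    expMeasure r (Set.Ioi x) = ENNReal.ofReal (Real.exp (-(r * x))) := by
  have := isProbabilityMeasure_expMeasure hr
  rw [← Set.compl_Iic, prob_compl_eq_one_sub measurableSet_Iic, ← ofReal_cdf,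
    cdf_expMeasure_eq hr, if_pos hx, ← ENNReal.ofReal_one,
    ← ENNReal.ofReal_sub _ (sub_nonneg.2 (Real.exp_le_one_iff.2 (by nlinarith))), sub_sub_cancel]

theorem ae_nonneg_expMeasure (r : ℝ) : ∀ᵐ x ∂expMeasure r, 0 ≤ x := by
  simp_rw [ae_iff, not_le]
  change expMeasure r (Set.Iio 0) = 0
  rw [expMeasure, gammaMeasure, withDensity_apply _ measurableSet_Iio]
  exact lintegral_exponentialPDF_of_nonpos le_rfl

theorem measureReal_sum_sub_sum_ge_le_of_iIndepFun_of_mem_Icc_zero_one [IsProbabilityMeasure μ]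
    {κ : Type*} [Fintype ι] [Fintype κ] {X : ι → Ω → ℝ} {Y : κ → Ω → ℝ}
    (h_indep : iIndepFun (Sum.elim X Y) μ)
    (hX : ∀ i, AEMeasurable (X i) μ) (hY : ∀ j, AEMeasurable (Y j) μ)
    (hX_mem : ∀ i, ∀ᵐ ω ∂μ, X i ω ∈ Set.Icc (0 : ℝ) 1)
    (hY_mem : ∀ j, ∀ᵐ ω ∂μ, Y j ω ∈ Set.Icc (0 : ℝ) 1) {t : ℝ} (ht : 0 ≤ t) :
    μ.real {ω | t ≤ ∑ i, (X i ω - μ[X i]) - ∑ j, (Y j ω - μ[Y j])} ≤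
      Real.exp (-2 * t ^ 2 / (Fintype.card ι + Fintype.card κ)) := by
  set W : ι ⊕ κ → Ω → ℝ := Sum.elim X fun j ↦ -Y j
  have hW_indep : iIndepFun W μ := by
    convert h_indep.comp (Sum.elim (fun _ ↦ id) fun _ ↦ Neg.neg)
      (by rintro (i | j); exacts [measurable_id, measurable_neg]) using 1
    funext k
    cases k <;> rfl
  have h := measureReal_sum_sub_integral_ge_le_of_iIndepFun_of_mem_Icc hW_indep
    (s := Finset.univ) (a := Sum.elim (fun _ ↦ 0) fun _ ↦ -1) (b := Sum.elim (fun _ ↦ 1) fun _ ↦ 0)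
    (by rintro (i | j) -; exacts [hX i, (hY j).neg])
    (by
      rintro (i | j) -
      · exact hX_mem i
      · filter_upwards [hY_mem j] with ω hω using ⟨neg_le_neg hω.2, neg_nonpos.2 hω.1⟩)
    ht
  have h_sum : ∀ ω, ∑ k, (W k ω - μ[W k]) = ∑ i, (X i ω - μ[X i]) - ∑ j, (Y j ω - μ[Y j]) := by
    intro ω
    simp [W, Fintype.sum_sum_type, integral_neg, Finset.sum_sub_distrib]
    ring
  have h_width : ∑ k : ι ⊕ κ, (Sum.elim (fun _ ↦ 1) (fun _ ↦ 0) k -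
      Sum.elim (fun _ ↦ 0) (fun _ ↦ -1) k : ℝ) ^ 2 = Fintype.card ι + Fintype.card κ := by
    simp [Fintype.sum_sum_type]
  simpa only [h_sum, h_width] using h

theorem measure_sum_sub_sum_le_half_gap_le [IsProbabilityMeasure μ] {n : ℕ}
    {X Y : Fin n → Ω → ℝ} {m Δ : ℝ} (h_indep : iIndepFun (Sum.elim X Y) μ)
    (hX : ∀ i, AEMeasurable (X i) μ) (hY : ∀ i, AEMeasurable (Y i) μ)
    (hX_mem : ∀ i, ∀ᵐ ω ∂μ, X i ω ∈ Set.Icc (0 : ℝ) 1)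
    (hY_mem : ∀ i, ∀ᵐ ω ∂μ, Y i ω ∈ Set.Icc (0 : ℝ) 1)
    (hX_mean : ∀ i, μ[X i] = m) (hY_mean : ∀ i, μ[Y i] = m + Δ) (hΔ : 0 ≤ Δ) :
    μ {ω | (∑ i, Y i ω) - ∑ i, X i ω ≤ n * Δ / 2} ≤
      ENNReal.ofReal (Real.exp (-(n : ℝ) * Δ ^ 2 / 4)) := by
  have h := measureReal_sum_sub_sum_ge_le_of_iIndepFun_of_mem_Icc_zero_one h_indep hX hY
    hX_mem hY_mem (by positivity : 0 ≤ (n : ℝ) * Δ / 2)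
  have h_event : {ω | (∑ i, Y i ω) - ∑ i, X i ω ≤ n * Δ / 2} =
      {ω | n * Δ / 2 ≤ ∑ i, (X i ω - μ[X i]) - ∑ i, (Y i ω - μ[Y i])} := by
    ext ω
    simp only [hX_mean, hY_mean, Finset.sum_sub_distrib, Finset.sum_const, Finset.card_univ,
      Fintype.card_fin, nsmul_eq_mul, Set.mem_ofPred_eq]
    constructor <;> intro h <;> linarith
  have h_exponent : -2 * ((n : ℝ) * Δ / 2) ^ 2 / (Fintype.card (Fin n) + Fintype.card (Fin n)) =
      -(n : ℝ) * Δ ^ 2 / 4 := by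
    rw [Fintype.card_fin]
    rcases eq_or_ne (n : ℝ) 0 with hn | hn
    · simp [hn]
    · field_simp
      ring
  rw [h_event, ← ofReal_measureReal, ← h_exponent]
  exact ENNReal.ofReal_le_ofReal h

end ProbabilityTheory

theorem reportNoisyMax_exponential_tail_general {Ω : Type*} [MeasurableSpace Ω] (μ : Measure Ω)
    [IsProbabilityMeasure μ] (n : ℕ) (ε Δ m : ℝ) (hε : 0 < ε) (hΔ : 0 < Δ)
    (X Y : Fin n → Ω → ℝ) (Q Q' : Ω → ℝ)
    (hX : ∀ i, Measurable (X i)) (hY : ∀ i, Measurable (Y i))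
    (hQ : Measurable Q) (hQ' : Measurable Q')
    (hXrange : ∀ i ω, X i ω ∈ Set.Icc (0 : ℝ) 1)
    (hYrange : ∀ i ω, Y i ω ∈ Set.Icc (0 : ℝ) 1)
    (hXmean : ∀ i, ∫ ω, X i ω ∂μ = m)
    (hYmean : ∀ i, ∫ ω, Y i ω ∂μ = m + Δ)
    (hQdist : Measure.map Q μ = expMeasure ε)
    (hQ'dist : Measure.map Q' μ = expMeasure ε)
    (hIndep : iIndepFun (Sum.elim (Sum.elim X Y) ![Q, Q']) μ) :
    μ {ω | -(∑ i, X i ω) + Q ω < -(∑ i, Y i ω) + Q' ω} ≤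
      ENNReal.ofReal (Real.exp (-(n : ℝ) * Δ ^ 2 / 4) + Real.exp (-ε * n * Δ / 2)) := by
  have h_indep : iIndepFun (Sum.elim X Y) μ := (hIndep.precomp Sum.inl_injective :)
  have h_gap := measure_sum_sub_sum_le_half_gap_le h_indep (fun i ↦ (hX i).aemeasurable)
    (fun i ↦ (hY i).aemeasurable) (fun i ↦ ae_of_all _ (hXrange i))
    (fun i ↦ ae_of_all _ (hYrange i)) hXmean hYmean hΔ.le
  have hQ'_tail : μ {ω | n * Δ / 2 < Q' ω} = ENNReal.ofReal (Real.exp (-ε * n * Δ / 2)) := by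
    change μ (Q' ⁻¹' Set.Ioi _) = _
    rw [← Measure.map_apply hQ' measurableSet_Ioi, hQ'dist, expMeasure_Ioi hε (by positivity)]
    ring_nf
  have hQ_nonneg : ∀ᵐ ω ∂μ, 0 ≤ Q ω :=
    ae_of_ae_map hQ.aemeasurable (hQdist ▸ ae_nonneg_expMeasure ε)
  calc μ {ω | -(∑ i, X i ω) + Q ω < -(∑ i, Y i ω) + Q' ω}
      ≤ μ ({ω | (∑ i, Y i ω) - ∑ i, X i ω ≤ n * Δ / 2} ∪ {ω | n * Δ / 2 < Q' ω}) := by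
        refine measure_mono_ae (hQ_nonneg.mono fun ω hQω hω ↦ ?_)
        change (_ : ℝ) < _ at hω
        change (_ : ℝ) ≤ _ ∨ (_ : ℝ) < _
        by_contra! h
        linarith [h.1, h.2]
    _ ≤ μ {ω | (∑ i, Y i ω) - ∑ i, X i ω ≤ n * Δ / 2} + μ {ω | n * Δ / 2 < Q' ω} :=
        measure_union_le _ _
    _ ≤ _ := by
        rw [hQ'_tail, ENNReal.ofReal_add (by positivity) (by positivity)]
        gcongr

/-- Tail bound for report-noisy-max with exponential noise: the probability that a suboptimal
action (with accumulated loss `G' = ∑ Y i` of mean `n(μ+Δ)`) beats the optimal action (with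
accumulated loss `G = ∑ X i` of mean `nμ`) is at most `exp(-nΔ²/4) + exp(-εnΔ/2)`. -/
theorem reportNoisyMax_exponential_tail {Ω : Type*} [MeasurableSpace Ω] (μ : Measure Ω)
    [IsProbabilityMeasure μ] (n : ℕ) (hn : 1 ≤ n) (ε Δ m : ℝ) (hε : 0 < ε) (hΔ : 0 < Δ)
    (X Y : Fin n → Ω → ℝ) (Q Q' : Ω → ℝ)
    (hX : ∀ i, Measurable (X i)) (hY : ∀ i, Measurable (Y i))
    (hQ : Measurable Q) (hQ' : Measurable Q')
    (hXrange : ∀ i ω, X i ω ∈ Set.Icc (0 : ℝ) 1)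
    (hYrange : ∀ i ω, Y i ω ∈ Set.Icc (0 : ℝ) 1)
    (hXid : ∀ i j, Measure.map (X i) μ = Measure.map (X j) μ)
    (hYid : ∀ i j, Measure.map (Y i) μ = Measure.map (Y j) μ)
    (hXmean : ∀ i, ∫ ω, X i ω ∂μ = m)
    (hYmean : ∀ i, ∫ ω, Y i ω ∂μ = m + Δ)
    (hQdist : Measure.map Q μ = expMeasure ε)
    (hQ'dist : Measure.map Q' μ = expMeasure ε)
    (hIndep : iIndepFun (Sum.elim (Sum.elim X Y) ![Q, Q']) μ) :
    μ {ω | -(∑ i, X i ω) + Q ω < -(∑ i, Y i ω) + Q' ω} ≤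
      ENNReal.ofReal (Real.exp (-(n : ℝ) * Δ ^ 2 / 4) + Real.exp (-ε * n * Δ / 2)) :=
  reportNoisyMax_exponential_tail_general μ n ε Δ m hε hΔ X Y Q Q' hX hY hQ hQ' hXrange hYrange
    hXmean hYmean hQdist hQ'dist hIndep
end

section
/- Let β > 0, let a_1, …, a_K ∈ ℝ, and let Q_1, …, Q_K be i.i.d. real-valued random variables with the Gumbel(β) distribution. Then for every index j ∈ {1,…,K}, P[a_j + Q_j > max_{i ≠ j}(a_i + Q_i)] = exp(a_j/β) / ∑_{i=1}^{K} exp(a_i/β). -/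
/-! Conditioning on the noise `t` of index `j`, every other index `k` loses independently with
probability `F (a j + t - a k)`, where `F s = exp (-exp (-s / β))` is the Gumbel CDF; the
product of these is `exp (-S * exp (-t / β))` with `S = ∑_{k ≠ j} exp ((a k - a j) / β)`.
Multiplied by the Gumbel density, it has the explicit antiderivative
`exp (-(1 + S) * exp (-t / β)) / (1 + S)`, so the winning probability is `1 / (1 + S)`,
the softmax weight of `j`. -/

open MeasureTheory ProbabilityTheory
open scoped ENNReal

/-- The Gumbel distribution with scale `β`, i.e. the measure on `ℝ` with density
`x ↦ (1/β) * exp(-x/β - exp(-x/β))` with respect to Lebesgue measure. -/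
noncomputable def gumbelMeasure (β : ℝ) : Measure ℝ :=
  MeasureTheory.volume.withDensity fun x =>
    ENNReal.ofReal ((1 / β) * Real.exp (-x / β - Real.exp (-x / β)))

open Filter Set Topology

theorem integrable_deriv_of_nonneg {f f' : ℝ → ℝ} {m n : ℝ}
    (hderiv : ∀ x, HasDerivAt f (f' x) x) (hpos : ∀ x, 0 ≤ f' x)
    (hbot : Tendsto f atBot (𝓝 m)) (htop : Tendsto f atTop (𝓝 n)) : Integrable f' := by
  have hcont : Continuous f := continuous_iff_continuousAt.2 fun x => (hderiv x).continuousAt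
  have hint (a b : ℝ) : IntervalIntegrable f' volume a b :=
    intervalIntegral.intervalIntegrable_deriv_of_nonneg hcont.continuousOn (fun x _ => hderiv x)
      (fun x _ => hpos x)
  refine integrable_of_intervalIntegral_norm_tendsto (n - m) (fun i => (hint (-i) i).1)
    tendsto_neg_atTop_atBot tendsto_id ?_
  have hFTC (i : ℝ) : ∫ x in -i..i, ‖f' x‖ = f i - f (-i) := by
    simp only [Real.norm_of_nonneg (hpos _)]
    exact intervalIntegral.integral_eq_sub_of_hasDerivAt (fun x _ => hderiv x) (hint _ _)
  rw [funext hFTC]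
  exact htop.sub (hbot.comp tendsto_neg_atTop_atBot)

noncomputable def gumbelKernel (β c x : ℝ) : ℝ :=
  1 / β * Real.exp (-x / β) * Real.exp (-c * Real.exp (-x / β))

section Gumbel

variable {β c : ℝ}

theorem gumbel_density_mul_exp (β c x : ℝ) :
    1 / β * Real.exp (-x / β - Real.exp (-x / β)) * Real.exp (-c * Real.exp (-x / β)) =
      gumbelKernel β (1 + c) x := by
  rw [gumbelKernel, mul_assoc, mul_assoc, ← Real.exp_add, ← Real.exp_add]
  ring_nf

theorem hasDerivAt_exp_neg_mul_exp_neg_div (hc : c ≠ 0) (x : ℝ) :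
    HasDerivAt (fun x => Real.exp (-c * Real.exp (-x / β)) / c) (gumbelKernel β c x) x := by
  refine (((((hasDerivAt_neg x).div_const β).exp.const_mul (-c)).exp).div_const c).congr_deriv ?_
  rw [gumbelKernel]
  field_simp

theorem tendsto_exp_neg_mul_exp_neg_div_atBot (hβ : 0 < β) (hc : 0 < c) :
    Tendsto (fun x => Real.exp (-c * Real.exp (-x / β))) atBot (𝓝 0) :=
  Real.tendsto_exp_atBot.comp <| (Real.tendsto_exp_atTop.comp
    (tendsto_neg_atBot_atTop.atTop_div_const hβ)).const_mul_atTop_of_neg (neg_neg_of_pos hc)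

theorem tendsto_exp_neg_mul_exp_neg_div_atTop (hβ : 0 < β) :
    Tendsto (fun x => Real.exp (-c * Real.exp (-x / β))) atTop (𝓝 1) := by
  simpa [Function.comp_def] using (Real.continuous_exp.tendsto _).comp <|
    (Real.tendsto_exp_atBot.comp (tendsto_neg_atTop_atBot.atBot_div_const hβ)).const_mul (-c)

theorem integrable_gumbelKernel (hβ : 0 < β) (hc : 0 < c) : Integrable (gumbelKernel β c) :=
  integrable_deriv_of_nonneg (hasDerivAt_exp_neg_mul_exp_neg_div hc.ne')
    (fun x => by unfold gumbelKernel; positivity)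
    ((tendsto_exp_neg_mul_exp_neg_div_atBot hβ hc).div_const c)
    ((tendsto_exp_neg_mul_exp_neg_div_atTop hβ).div_const c)

theorem integral_gumbelKernel (hβ : 0 < β) (hc : 0 < c) : ∫ x, gumbelKernel β c x = 1 / c := by
  rw [integral_of_hasDerivAt_of_tendsto (hasDerivAt_exp_neg_mul_exp_neg_div hc.ne')
    (integrable_gumbelKernel hβ hc) ((tendsto_exp_neg_mul_exp_neg_div_atBot hβ hc).div_const c)
    ((tendsto_exp_neg_mul_exp_neg_div_atTop hβ).div_const c)]
  simp

theorem lintegral_exp_neg_mul_exp_gumbelMeasure (hβ : 0 < β) (hc : 0 ≤ c) :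
    ∫⁻ x, ENNReal.ofReal (Real.exp (-c * Real.exp (-x / β))) ∂gumbelMeasure β =
      ENNReal.ofReal (1 / (1 + c)) := by
  have hc' : 0 < 1 + c := by linarith
  have hdens (x : ℝ) : ENNReal.ofReal (1 / β * Real.exp (-x / β - Real.exp (-x / β))) *
      ENNReal.ofReal (Real.exp (-c * Real.exp (-x / β))) =
        ENNReal.ofReal (gumbelKernel β (1 + c) x) := by
    rw [← ENNReal.ofReal_mul (by positivity), gumbel_density_mul_exp]
  rw [gumbelMeasure, lintegral_withDensity_eq_lintegral_mul _ (by fun_prop) (by fun_prop)]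
  simp only [Pi.mul_apply, hdens]
  rw [← ofReal_integral_eq_lintegral_ofReal (integrable_gumbelKernel hβ hc')
    (Eventually.of_forall fun x => by unfold gumbelKernel; positivity),
    integral_gumbelKernel hβ hc']

theorem isProbabilityMeasure_gumbelMeasure (hβ : 0 < β) :
    IsProbabilityMeasure (gumbelMeasure β) :=
  ⟨by simpa using lintegral_exp_neg_mul_exp_gumbelMeasure hβ (le_refl (0 : ℝ))⟩

theorem gumbelMeasure_Iio (hβ : 0 < β) (t : ℝ) :
    gumbelMeasure β (Iio t) = ENNReal.ofReal (Real.exp (-Real.exp (-t / β))) := by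
  have hdens (x : ℝ) :
      1 / β * Real.exp (-x / β - Real.exp (-x / β)) = gumbelKernel β 1 x := by
    simpa using gumbel_density_mul_exp β 0 x
  rw [gumbelMeasure, withDensity_apply _ measurableSet_Iio]
  simp_rw [hdens]
  rw [← ofReal_integral_eq_lintegral_ofReal (integrable_gumbelKernel hβ one_pos).integrableOn
    (Eventually.of_forall fun x => by unfold gumbelKernel; positivity),
    ← integral_Iic_eq_integral_Iio, integral_Iic_of_hasDerivAt_of_tendsto'
      (fun x _ => hasDerivAt_exp_neg_mul_exp_neg_div one_ne_zero x)
      (integrable_gumbelKernel hβ one_pos).integrableOn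
      ((tendsto_exp_neg_mul_exp_neg_div_atBot hβ one_pos).div_const 1)]
  simp

theorem one_div_one_add_sum_exp_sub_div {n : ℕ} (a : Fin (n + 1) → ℝ) (j : Fin (n + 1)) :
    1 / (1 + ∑ k, Real.exp ((a (j.succAbove k) - a j) / β)) =
      Real.exp (a j / β) / ∑ i, Real.exp (a i / β) := by
  simp_rw [Fin.sum_univ_succAbove _ j, sub_div, Real.exp_sub, ← Finset.sum_div]
  field_simp

end Gumbel

theorem measure_pi_setOf_forall_ne_lt {n : ℕ} (ν : Measure ℝ) [SigmaFinite ν]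
    (a : Fin (n + 1) → ℝ) (j : Fin (n + 1)) :
    Measure.pi (fun _ => ν) {x | ∀ i, i ≠ j → a i + x i < a j + x j} =
      ∫⁻ t, ∏ k, ν (Iio (a j + t - a (j.succAbove k))) ∂ν := by
  set U : Set (ℝ × (Fin n → ℝ)) := {p | ∀ k, a (j.succAbove k) + p.2 k < a j + p.1}
  have hU : MeasurableSet U := by
    simp only [U, ofPred_forall]
    exact .iInter fun k => measurableSet_lt (by fun_prop) (by fun_prop)
  have hpre : {x : Fin (n + 1) → ℝ | ∀ i, i ≠ j → a i + x i < a j + x j} =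
      MeasurableEquiv.piFinSuccAbove (fun _ => ℝ) j ⁻¹' U := by
    ext x
    simp [U, Fin.forall_iff_succAbove j, Fin.succAbove_ne, Fin.removeNth]
  rw [hpre, (measurePreserving_piFinSuccAbove (fun _ => ν) j).measure_preimage
    hU.nullMeasurableSet, Measure.prod_apply hU]
  refine lintegral_congr fun t => ?_
  rw [← Measure.pi_pi]
  congr 1
  ext y
  simp [U, lt_sub_iff_add_lt']

theorem gumbelMeasure_pi_setOf_forall_ne_lt {β : ℝ} (hβ : 0 < β) {n : ℕ}
    (a : Fin (n + 1) → ℝ) (j : Fin (n + 1)) :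
    Measure.pi (fun _ => gumbelMeasure β) {x | ∀ i, i ≠ j → a i + x i < a j + x j} =
      ENNReal.ofReal (Real.exp (a j / β) / ∑ i, Real.exp (a i / β)) := by
  have := isProbabilityMeasure_gumbelMeasure hβ
  set S := ∑ k, Real.exp ((a (j.succAbove k) - a j) / β)
  have hprod (t : ℝ) : ∏ k, gumbelMeasure β (Iio (a j + t - a (j.succAbove k))) =
      ENNReal.ofReal (Real.exp (-S * Real.exp (-t / β))) := by
    simp_rw [gumbelMeasure_Iio hβ]
    rw [← ENNReal.ofReal_prod_of_nonneg (fun k _ => (Real.exp_pos _).le), ← Real.exp_sum,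
      neg_mul, Finset.sum_mul, ← Finset.sum_neg_distrib]
    refine congrArg _ (congrArg _ (Finset.sum_congr rfl fun k _ => ?_))
    rw [← Real.exp_add]
    ring_nf
  rw [measure_pi_setOf_forall_ne_lt, lintegral_congr hprod,
    lintegral_exp_neg_mul_exp_gumbelMeasure hβ (by positivity), one_div_one_add_sum_exp_sub_div]

theorem reportNoisyMax_gumbel_eq_softmax_general {Ω : Type*} [MeasurableSpace Ω] (μ : Measure Ω)
    [IsProbabilityMeasure μ] {K : ℕ} (β : ℝ) (hβ : 0 < β)
    (a : Fin K → ℝ) (Q : Fin K → Ω → ℝ) (hQ : ∀ i, Measurable (Q i))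
    (hQdist : ∀ i, Measure.map (Q i) μ = gumbelMeasure β)
    (hIndep : iIndepFun Q μ) :
    ∀ j : Fin K, μ {ω | ∀ i, i ≠ j → a i + Q i ω < a j + Q j ω} =
      ENNReal.ofReal (Real.exp (a j / β) / ∑ i, Real.exp (a i / β)) := by
  intro j
  cases K with
  | zero => exact j.elim0
  | succ n =>
    have hlaw : μ.map (fun ω i => Q i ω) = Measure.pi fun _ => gumbelMeasure β := by
      simp only [hIndep.map_fun_eq_pi_map fun i => (hQ i).aemeasurable, hQdist]
    have hmeas :
        MeasurableSet {x : Fin (n + 1) → ℝ | ∀ i, i ≠ j → a i + x i < a j + x j} := by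
      measurability
    rw [← gumbelMeasure_pi_setOf_forall_ne_lt hβ, ← hlaw,
      Measure.map_apply (measurable_pi_lambda _ hQ) hmeas]
    rfl

/-- The Gumbel-max trick: report-noisy-max with i.i.d. `Gumbel(β)` noise selects index `j`
with the softmax probability `exp(a j / β) / ∑ i, exp(a i / β)`. -/
theorem reportNoisyMax_gumbel_eq_softmax {Ω : Type*} [MeasurableSpace Ω] (μ : Measure Ω)
    [IsProbabilityMeasure μ] {K : ℕ} (hK : 1 ≤ K) (β : ℝ) (hβ : 0 < β)
    (a : Fin K → ℝ) (Q : Fin K → Ω → ℝ) (hQ : ∀ i, Measurable (Q i))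
    (hQdist : ∀ i, Measure.map (Q i) μ = gumbelMeasure β)
    (hIndep : iIndepFun Q μ) :
    ∀ j : Fin K, μ {ω | ∀ i, i ≠ j → a i + Q i ω < a j + Q j ω} =
      ENNReal.ofReal (Real.exp (a j / β) / ∑ i, Real.exp (a i / β)) :=
  reportNoisyMax_gumbel_eq_softmax_general μ β hβ a Q hQ hQdist hIndep
end

section
/- Let n ≥ 1, ε > 0, and Δ > 0. Let X_1, …, X_n be i.i.d. random variables taking values in [0,1] with mean μ, and let Y_1, …, Y_n be i.i.d. random variables taking values in [0,1] with mean μ + Δ, all mutually independent. Set G = ∑_{i=1}^n X_i and G' = ∑_{i=1}^n Y_i. Then E[1/(exp(ε·(G' − G)) + 1)] ≤ exp(−ε·nΔ/2) + exp(−nΔ²/4). -/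
/-!
Cut at half the mean of `G' - G = ∑ Y i - ∑ X i`, which is `nΔ`. Where `G' - G > nΔ / 2` the
weight `1 / (exp (ε (G' - G)) + 1)` is below `exp (-εnΔ / 2)`; elsewhere it is below `1`, and
that event has probability at most `exp (-nΔ² / 4)` by Hoeffding's inequality for the `2n`
independent centred variables `X i - E[X i]` and `E[Y i] - Y i`, each sub-Gaussian with
variance proxy `1 / 4`.
-/

open MeasureTheory ProbabilityTheory Real

lemma one_div_exp_add_one_le_exp_neg (x : ℝ) : 1 / (exp x + 1) ≤ exp (-x) := by
  rw [exp_neg, ← one_div]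
  exact one_div_le_one_div_of_le (exp_pos x) (by linarith)

lemma one_div_exp_add_one_le_one (x : ℝ) : 1 / (exp x + 1) ≤ 1 := by
  rw [div_le_one (by positivity)]
  linarith [exp_pos x]

lemma one_div_exp_mul_add_one_le {ε : ℝ} (hε : 0 ≤ ε) (s t : ℝ) :
    1 / (exp (ε * s) + 1) ≤ exp (-(ε * t)) + (Set.Iic t).indicator 1 s := by
  by_cases hst : s ≤ t
  · rw [Set.indicator_of_mem (Set.mem_Iic.2 hst), Pi.one_apply]
    linarith [one_div_exp_add_one_le_one (ε * s), exp_pos (-(ε * t))]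
  · rw [Set.indicator_of_notMem (mt Set.mem_Iic.1 hst), add_zero]
    calc 1 / (exp (ε * s) + 1) ≤ exp (-(ε * s)) := one_div_exp_add_one_le_exp_neg _
      _ ≤ exp (-(ε * t)) := by
        gcongr
        linarith [not_le.mp hst]

section

variable {Ω : Type*} [MeasurableSpace Ω] {μ : Measure Ω} [IsProbabilityMeasure μ]

lemma integral_one_div_exp_mul_add_one_le {f : Ω → ℝ} (hf : Measurable f) {ε : ℝ}
    (hε : 0 ≤ ε) (t : ℝ) :
    ∫ ω, 1 / (exp (ε * f ω) + 1) ∂μ ≤ exp (-(ε * t)) + μ.real {ω | f ω ≤ t} := by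
  have hmeas : MeasurableSet {ω | f ω ≤ t} := measurableSet_le hf measurable_const
  have hint : Integrable (fun ω ↦ 1 / (exp (ε * f ω) + 1)) μ := by
    refine Integrable.of_bound
      (measurable_const.div ((hf.const_mul ε).exp.add measurable_const)).aestronglyMeasurable 1
      (ae_of_all _ fun ω ↦ ?_)
    rw [Real.norm_of_nonneg (by positivity)]
    exact one_div_exp_add_one_le_one _
  calc ∫ ω, 1 / (exp (ε * f ω) + 1) ∂μ
      ≤ ∫ ω, (exp (-(ε * t)) + {ω | f ω ≤ t}.indicator 1 ω) ∂μ :=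
        integral_mono hint ((integrable_const _).add ((integrable_const 1).indicator hmeas))
          fun ω ↦ one_div_exp_mul_add_one_le hε (f ω) t
    _ = exp (-(ε * t)) + μ.real {ω | f ω ≤ t} := by
        rw [integral_add (integrable_const _) ((integrable_const 1).indicator hmeas),
          integral_indicator_one hmeas]
        simp

lemma measureReal_sum_sub_sum_le_le {ι : Type*} [Fintype ι] {X Y : ι → Ω → ℝ} {a b : ℝ}
    (hX : ∀ i, Measurable (X i)) (hY : ∀ i, Measurable (Y i))
    (hXab : ∀ i ω, X i ω ∈ Set.Icc a b) (hYab : ∀ i ω, Y i ω ∈ Set.Icc a b)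
    (hindep : iIndepFun (Sum.elim X Y) μ) {t : ℝ} (ht : 0 ≤ t) :
    μ.real {ω | ∑ i, Y i ω - ∑ i, X i ω ≤ ∑ i, μ[Y i] - ∑ i, μ[X i] - t} ≤
      exp (-t ^ 2 / (Fintype.card ι * (b - a) ^ 2)) := by
  set Z : ι ⊕ ι → Ω → ℝ :=
    Sum.elim (fun i ω ↦ X i ω - μ[X i]) (fun i ω ↦ -(Y i ω - μ[Y i])) with hZ
  have hZindep : iIndepFun Z μ := by
    convert hindep.comp (Sum.elim (fun i x ↦ x - μ[X i]) (fun i x ↦ -(x - μ[Y i])))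
      (by rintro (i | i); exacts [measurable_id.sub_const _, (measurable_id.sub_const _).neg])
      using 1
    ext (i | i) ω <;> rfl
  have hZsubG : ∀ k, HasSubgaussianMGF (Z k) ((‖b - a‖₊ / 2) ^ 2) μ := by
    rintro (i | i)
    · exact hasSubgaussianMGF_of_mem_Icc (hX i).aemeasurable (ae_of_all _ (hXab i))
    · exact (hasSubgaussianMGF_of_mem_Icc (hY i).aemeasurable (ae_of_all _ (hYab i))).neg
  have hsumZ : ∀ ω, ∑ k, Z k ω = ∑ i, μ[Y i] - ∑ i, μ[X i] - (∑ i, Y i ω - ∑ i, X i ω) := by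
    intro ω
    simp only [hZ, Fintype.sum_sum_type, Sum.elim_inl, Sum.elim_inr, neg_sub,
      Finset.sum_sub_distrib]
    ring
  calc μ.real {ω | ∑ i, Y i ω - ∑ i, X i ω ≤ ∑ i, μ[Y i] - ∑ i, μ[X i] - t}
      ≤ μ.real {ω | t ≤ ∑ k ∈ Finset.univ, Z k ω} :=
        measureReal_mono fun ω hω ↦ by
          simp only [Set.mem_ofPred_eq, hsumZ] at hω ⊢
          linarith
    _ ≤ exp (-t ^ 2 / (2 * ∑ _k : ι ⊕ ι, (((‖b - a‖₊ / 2) ^ 2 : NNReal) : ℝ))) := by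
        exact_mod_cast HasSubgaussianMGF.measure_sum_ge_le_of_iIndepFun hZindep
          (fun k _ ↦ hZsubG k) ht
    _ = exp (-t ^ 2 / (Fintype.card ι * (b - a) ^ 2)) := by
        simp only [Finset.sum_const, Finset.card_univ, Fintype.card_sum,
          nsmul_eq_mul]
        push_cast
        rw [norm_eq_abs, div_pow, sq_abs]
        ring_nf

end

theorem expected_softmax_weight_le_general {Ω : Type*} [MeasurableSpace Ω] (μ : Measure Ω)
    [IsProbabilityMeasure μ] (n : ℕ) (ε Δ m : ℝ) (hε : 0 < ε) (hΔ : 0 < Δ)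
    (X Y : Fin n → Ω → ℝ)
    (hX : ∀ i, Measurable (X i)) (hY : ∀ i, Measurable (Y i))
    (hXrange : ∀ i ω, X i ω ∈ Set.Icc (0 : ℝ) 1)
    (hYrange : ∀ i ω, Y i ω ∈ Set.Icc (0 : ℝ) 1)
    (hXmean : ∀ i, ∫ ω, X i ω ∂μ = m)
    (hYmean : ∀ i, ∫ ω, Y i ω ∂μ = m + Δ)
    (hIndep : iIndepFun (Sum.elim X Y) μ) :
    ∫ ω, 1 / (Real.exp (ε * ((∑ i, Y i ω) - ∑ i, X i ω)) + 1) ∂μ ≤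
      Real.exp (-ε * n * Δ / 2) + Real.exp (-(n : ℝ) * Δ ^ 2 / 4) := by
  have hhalf_mean : ∑ i, μ[Y i] - ∑ i, μ[X i] - n * Δ / 2 = n * Δ / 2 := by
    simp only [hXmean, hYmean, Finset.sum_const, Finset.card_univ, Fintype.card_fin,
      nsmul_eq_mul]
    ring
  have htail := measureReal_sum_sub_sum_le_le hX hY hXrange hYrange hIndep
    (t := n * Δ / 2) (by positivity)
  rw [hhalf_mean, Fintype.card_fin] at htail
  calc ∫ ω, 1 / (exp (ε * ((∑ i, Y i ω) - ∑ i, X i ω)) + 1) ∂μ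
      ≤ exp (-(ε * (n * Δ / 2))) + μ.real {ω | ∑ i, Y i ω - ∑ i, X i ω ≤ n * Δ / 2} :=
        integral_one_div_exp_mul_add_one_le (by fun_prop) hε.le _
    _ ≤ exp (-(ε * (n * Δ / 2))) + exp (-(n * Δ / 2) ^ 2 / (n * (1 - 0) ^ 2)) := by gcongr
    _ = exp (-ε * n * Δ / 2) + exp (-(n : ℝ) * Δ ^ 2 / 4) := by
        congr 2
        · ring
        · field_simp; ring

/-- Key estimate for the tail bound of report-noisy-max with Gumbel noise: the expected
softmax-type weight of a suboptimal action (accumulated loss `G' = ∑ Y i`, mean `n(μ+Δ)`)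
against the optimal action (accumulated loss `G = ∑ X i`, mean `nμ`) satisfies
`E[1/(exp(ε(G'-G)) + 1)] ≤ exp(-εnΔ/2) + exp(-nΔ²/4)`. -/
theorem expected_softmax_weight_le {Ω : Type*} [MeasurableSpace Ω] (μ : Measure Ω)
    [IsProbabilityMeasure μ] (n : ℕ) (hn : 1 ≤ n) (ε Δ m : ℝ) (hε : 0 < ε) (hΔ : 0 < Δ)
    (X Y : Fin n → Ω → ℝ)
    (hX : ∀ i, Measurable (X i)) (hY : ∀ i, Measurable (Y i))
    (hXrange : ∀ i ω, X i ω ∈ Set.Icc (0 : ℝ) 1)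
    (hYrange : ∀ i ω, Y i ω ∈ Set.Icc (0 : ℝ) 1)
    (hXid : ∀ i j, Measure.map (X i) μ = Measure.map (X j) μ)
    (hYid : ∀ i j, Measure.map (Y i) μ = Measure.map (Y j) μ)
    (hXmean : ∀ i, ∫ ω, X i ω ∂μ = m)
    (hYmean : ∀ i, ∫ ω, Y i ω ∂μ = m + Δ)
    (hIndep : iIndepFun (Sum.elim X Y) μ) :
    ∫ ω, 1 / (Real.exp (ε * ((∑ i, Y i ω) - ∑ i, X i ω)) + 1) ∂μ ≤
      Real.exp (-ε * n * Δ / 2) + Real.exp (-(n : ℝ) * Δ ^ 2 / 4) :=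
  expected_softmax_weight_le_general μ n ε Δ m hε hΔ X Y hX hY hXrange hYrange hXmean hYmean hIndep
end

section
/- For every natural number K ≥ 1 and all real numbers a_1, …, a_K, the function f(x) = (∑_{i=1}^K 2^x·a_i·e^{−2^x·a_i}) / (∑_{i=1}^K e^{−2^x·a_i}) is differentiable on ℝ and satisfies f'(x) ≤ (log 2)·f(x) for every x ∈ ℝ. -/
/-!
With `b i = 2 ^ x * a i`, every `b i` satisfies `b i' = log 2 * b i`, so differentiating the
quotient gives `f' = log 2 * (E b - Var b)`, mean and variance taken for the Gibbs weights
`exp (-b i)`. The variance is nonnegative by Cauchy–Schwarz.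
-/

open Real Finset

/-- The soft-max like function
`f(x) = (∑ i, 2^x * a i * exp(-2^x * a i)) / (∑ i, exp(-2^x * a i))`. -/
noncomputable def softMaxLike {K : ℕ} (a : Fin K → ℝ) (x : ℝ) : ℝ :=
  (∑ i, (2 : ℝ) ^ x * a i * Real.exp (-((2 : ℝ) ^ x * a i))) /
    (∑ i, Real.exp (-((2 : ℝ) ^ x * a i)))

section ExpMoment

variable {ι : Type*} [Fintype ι]

noncomputable def expMoment (b : ι → ℝ) (n : ℕ) : ℝ :=
  ∑ i, b i ^ n * exp (-b i)

lemma expMoment_zero_pos [Nonempty ι] (b : ι → ℝ) : 0 < expMoment b 0 :=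
  sum_pos (fun i _ => by positivity) univ_nonempty

lemma expMoment_one_sq_div_le (b : ι → ℝ) :
    expMoment b 1 ^ 2 / expMoment b 0 ≤ expMoment b 2 := by
  have h2 : expMoment b 2 = ∑ i, (b i * exp (-b i)) ^ 2 / exp (-b i) :=
    sum_congr rfl fun i _ => by rw [eq_div_iff (exp_pos _).ne']; ring
  rw [h2]
  simpa only [expMoment, pow_one, pow_zero, one_mul] using
    sq_sum_div_le_sum_sq_div univ (fun i => b i * exp (-b i)) fun i _ => exp_pos (-b i)

lemma hasDerivAt_expMoment {u : ℝ → ι → ℝ} {c x : ℝ}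
    (hu : ∀ i, HasDerivAt (fun y => u y i) (c * u x i) x) (n : ℕ) :
    HasDerivAt (fun y => expMoment (u y) n)
      (c * (n * expMoment (u x) n - expMoment (u x) (n + 1))) x := by
  unfold expMoment
  rw [mul_sub, mul_sum, mul_sum, mul_sum, ← sum_sub_distrib]
  refine HasDerivAt.fun_sum fun i _ =>
    (((hu i).fun_pow n).fun_mul (hu i).fun_neg.exp).congr_deriv ?_
  rcases n with _ | n <;> push_cast <;> ring

lemma hasDerivAt_expMoment_one_div [Nonempty ι] {u : ℝ → ι → ℝ} {c x : ℝ}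
    (hu : ∀ i, HasDerivAt (fun y => u y i) (c * u x i) x) :
    HasDerivAt (fun y => expMoment (u y) 1 / expMoment (u y) 0)
      (c * (expMoment (u x) 1 / expMoment (u x) 0 -
        (expMoment (u x) 2 - expMoment (u x) 1 ^ 2 / expMoment (u x) 0) /
          expMoment (u x) 0)) x := by
  have h0 := (expMoment_zero_pos (u x)).ne'
  refine ((hasDerivAt_expMoment hu 1).div (hasDerivAt_expMoment hu 0) h0).congr_deriv ?_
  field_simp
  push_cast
  ring

lemma deriv_expMoment_one_div_le [Nonempty ι] {u : ℝ → ι → ℝ} {c x : ℝ} (hc : 0 ≤ c)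
    (hu : ∀ i, HasDerivAt (fun y => u y i) (c * u x i) x) :
    deriv (fun y => expMoment (u y) 1 / expMoment (u y) 0) x ≤
      c * (expMoment (u x) 1 / expMoment (u x) 0) := by
  rw [(hasDerivAt_expMoment_one_div hu).deriv]
  have hvar : 0 ≤ (expMoment (u x) 2 - expMoment (u x) 1 ^ 2 / expMoment (u x) 0) /
      expMoment (u x) 0 :=
    div_nonneg (sub_nonneg.mpr (expMoment_one_sq_div_le _)) (expMoment_zero_pos _).le
  gcongr
  linarith

end ExpMoment

/-- The soft-max like function is differentiable and satisfies `f'(x) ≤ (log 2) * f(x)`. -/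
theorem softMaxLike_deriv_le (K : ℕ) (hK : 1 ≤ K) (a : Fin K → ℝ) :
    Differentiable ℝ (softMaxLike a) ∧
      ∀ x : ℝ, deriv (softMaxLike a) x ≤ Real.log 2 * softMaxLike a x := by
  have : Nonempty (Fin K) := ⟨⟨0, hK⟩⟩
  have hu (x : ℝ) (i : Fin K) :
      HasDerivAt (fun y => (2 : ℝ) ^ y * a i) (log 2 * ((2 : ℝ) ^ x * a i)) x :=
    ((hasStrictDerivAt_const_rpow two_pos x).hasDerivAt.mul_const (a i)).congr_deriv (by ring)
  have hf : softMaxLike a = fun y => expMoment (fun i => (2 : ℝ) ^ y * a i) 1 /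
      expMoment (fun i => (2 : ℝ) ^ y * a i) 0 := by
    funext y
    simp [softMaxLike, expMoment]
  rw [hf]
  exact ⟨fun x => (hasDerivAt_expMoment_one_div (hu x)).differentiableAt,
    fun x => deriv_expMoment_one_div_le (log_nonneg one_le_two) (hu x)⟩
end

section
/- Let c ≥ 0 and let f : ℝ → ℝ be differentiable with f(x) ≥ 0 for all x and f'(x) ≤ c·f(x) for all x. Then for every real number r, f(r) ≤ (1 + c) · ∫_{r−1}^{r} f(x) dx. -/
/-!
Integrating `f' ≤ c f` from `x` to `r` gives `f r ≤ f x + c ∫_x^r f ≤ f x + c ∫_{r-1}^r f` for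
every `x ∈ [r - 1, r]`, the last step because `f ≥ 0` and `c ≥ 0`. Averaging this over
`x ∈ [r - 1, r]` yields the claim.
-/

open Set intervalIntegral

section DerivLeMul

variable {f : ℝ → ℝ} {c : ℝ}

theorem sub_le_mul_integral_of_deriv_le_mul (hf : Differentiable ℝ f)
    (hf' : ∀ x, deriv f x ≤ c * f x) {x y : ℝ} (hxy : x ≤ y) :
    f y - f x ≤ c * ∫ t in x..y, f t := by
  rw [← integral_const_mul]
  exact sub_le_integral_of_hasDeriv_right_of_le hxy hf.continuous.continuousOn
    (fun t _ => (hf t).hasDerivAt.hasDerivWithinAt)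
    ((continuous_const.mul hf.continuous).integrableOn_Icc) (fun t _ => hf' t)

theorem le_add_mul_integral_of_deriv_le_mul (hc : 0 ≤ c) (hf : Differentiable ℝ f)
    (hf0 : ∀ x, 0 ≤ f x) (hf' : ∀ x, deriv f x ≤ c * f x) {a b x : ℝ} (hx : x ∈ Icc a b) :
    f b ≤ f x + c * ∫ t in a..b, f t := by
  have hsub := sub_le_mul_integral_of_deriv_le_mul hf hf' hx.2
  have hmono : ∫ t in x..b, f t ≤ ∫ t in a..b, f t :=
    integral_mono_interval hx.1 hx.2 le_rfl (Filter.Eventually.of_forall hf0)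
      (hf.continuous.intervalIntegrable a b)
  linarith [mul_le_mul_of_nonneg_left hmono hc]

theorem mul_le_mul_integral_of_deriv_le_mul (hc : 0 ≤ c) (hf : Differentiable ℝ f)
    (hf0 : ∀ x, 0 ≤ f x) (hf' : ∀ x, deriv f x ≤ c * f x) {a b : ℝ} (hab : a ≤ b) :
    (b - a) * f b ≤ (1 + c * (b - a)) * ∫ t in a..b, f t := by
  set I := ∫ t in a..b, f t
  calc (b - a) * f b = ∫ _ in a..b, f b := by simp
    _ ≤ ∫ x in a..b, (f x + c * I) :=
      integral_mono_on hab intervalIntegrable_const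
        ((hf.continuous.intervalIntegrable a b).add intervalIntegrable_const)
        (fun x hx => le_add_mul_integral_of_deriv_le_mul hc hf hf0 hf' hx)
    _ = (1 + c * (b - a)) * I := by
      rw [integral_add (hf.continuous.intervalIntegrable a b) intervalIntegrable_const]
      simp only [integral_const, smul_eq_mul]
      ring

end DerivLeMul

/-- If `f` is differentiable, nonnegative, and satisfies `f' ≤ c * f` with `c ≥ 0`, then
`f(r) ≤ (1 + c) * ∫_{r-1}^r f`. -/
theorem value_le_integral_of_deriv_le (c : ℝ) (hc : 0 ≤ c) (f : ℝ → ℝ)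
    (hf : Differentiable ℝ f) (hf0 : ∀ x, 0 ≤ f x)
    (hf' : ∀ x, deriv f x ≤ c * f x) :
    ∀ r : ℝ, f r ≤ (1 + c) * ∫ x in (r - 1)..r, f x := by
  intro r
  simpa using mul_le_mul_integral_of_deriv_le_mul hc hf hf0 hf' (sub_le_self r zero_le_one)
end

section
/- Let K ≥ 1 and let a_1, …, a_K be real numbers with a_1 = 0 and a_i > 0 for every i ≥ 2. Then the improper integral of f over [0, ∞) converges and ∫_{0}^{∞} f(x) dx = (1/log 2)·log(∑_{i=1}^{K} e^{−a_i}). -/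
/-!
With `Z(x) = ∑ i, exp (-(2 ^ x * a i))` one has `Z' = -log 2 · ∑ i, 2 ^ x a i e^{-2^x a i}`,
so `f = -(log Z)' / log 2`. Since `a ≥ 0`, `f ≥ 0`, and since exactly one `a i` vanishes,
`Z(x) → 1` as `x → ∞`. The integral of the nonnegative derivative `f` over `[0, ∞)` is therefore
`(log Z(0) - log 1) / log 2`, with `Z(0) = ∑ i, exp (-a i)`.
-/

noncomputable def partitionSum {K : ℕ} (a : Fin K → ℝ) (x : ℝ) : ℝ :=
  ∑ i, Real.exp (-((2 : ℝ) ^ x * a i))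

open Filter Topology MeasureTheory

section partitionSum

variable {K : ℕ} (a : Fin K → ℝ)

theorem partitionSum_pos [Nonempty (Fin K)] (x : ℝ) : 0 < partitionSum a x :=
  Finset.sum_pos (fun _ _ => Real.exp_pos _) Finset.univ_nonempty

@[simp]
theorem partitionSum_zero : partitionSum a 0 = ∑ i, Real.exp (-a i) := by
  simp [partitionSum]

theorem hasDerivAt_partitionSum (x : ℝ) :
    HasDerivAt (partitionSum a)
      (-Real.log 2 * ∑ i, (2 : ℝ) ^ x * a i * Real.exp (-((2 : ℝ) ^ x * a i))) x := by
  have hterm : ∀ i, HasDerivAt (fun y => Real.exp (-((2 : ℝ) ^ y * a i)))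
      (Real.exp (-((2 : ℝ) ^ x * a i)) * -((2 : ℝ) ^ x * Real.log 2 * a i)) x := fun i =>
    (((hasDerivAt_id x).const_rpow two_pos).mul_const (a i)).neg.exp.congr_deriv (by dsimp; ring)
  refine (HasDerivAt.fun_sum (u := Finset.univ) fun i _ => hterm i).congr_deriv ?_
  rw [Finset.mul_sum]
  exact Finset.sum_congr rfl fun i _ => by ring

theorem tendsto_partitionSum_atTop {i₀ : Fin K} (h₀ : a i₀ = 0)
    (hpos : ∀ i, i ≠ i₀ → 0 < a i) :
    Tendsto (partitionSum a) atTop (𝓝 1) := by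
  have hterm : ∀ i, Tendsto (fun x : ℝ => Real.exp (-((2 : ℝ) ^ x * a i))) atTop
      (𝓝 (if i = i₀ then 1 else 0)) := by
    intro i
    by_cases hi : i = i₀
    · simp [hi, h₀]
    · have hscale : Tendsto (fun x : ℝ => (2 : ℝ) ^ x * a i) atTop atTop :=
        (tendsto_rpow_atTop_of_base_gt_one 2 one_lt_two).atTop_mul_const (hpos i hi)
      simp only [hi, if_false]
      exact Real.tendsto_exp_atBot.comp (tendsto_neg_atTop_atBot.comp hscale)
  have hsum := tendsto_finsetSum Finset.univ fun i _ => hterm i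
  rw [Finset.sum_ite_eq' Finset.univ i₀, if_pos (Finset.mem_univ _)] at hsum
  exact hsum

end partitionSum

theorem softMaxLike_eq_div_partitionSum {K : ℕ} (a : Fin K → ℝ) (x : ℝ) :
    softMaxLike a x =
      (∑ i, (2 : ℝ) ^ x * a i * Real.exp (-((2 : ℝ) ^ x * a i))) / partitionSum a x :=
  rfl

theorem softMaxLike_nonneg {K : ℕ} {a : Fin K → ℝ} (ha : ∀ i, 0 ≤ a i) (x : ℝ) :
    0 ≤ softMaxLike a x :=
  div_nonneg (Finset.sum_nonneg fun i _ =>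
    mul_nonneg (mul_nonneg (by positivity) (ha i)) (Real.exp_pos _).le)
    (Finset.sum_nonneg fun _ _ => (Real.exp_pos _).le)

theorem hasDerivAt_log_partitionSum_div {K : ℕ} [Nonempty (Fin K)] (a : Fin K → ℝ) (x : ℝ) :
    HasDerivAt (fun y => -Real.log (partitionSum a y) / Real.log 2) (softMaxLike a x) x := by
  have hlog2 : Real.log 2 ≠ 0 := (Real.log_pos one_lt_two).ne'
  refine ((hasDerivAt_partitionSum a x).log (partitionSum_pos a x).ne').neg.div_const _
    |>.congr_deriv ?_
  rw [softMaxLike_eq_div_partitionSum]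
  field_simp

/-- If `a 0 = 0` and `a i > 0` for `i ≥ 2` (1-based), then the improper integral of the
soft-max like function over `[0, ∞)` converges and equals
`(1/log 2) * log (∑ i, exp (-a i))`. -/
theorem integral_softMaxLike_Ici (K : ℕ) (hK : 1 ≤ K) (a : Fin K → ℝ)
    (h0 : a ⟨0, hK⟩ = 0) (hpos : ∀ i : Fin K, 1 ≤ (i : ℕ) → 0 < a i) :
    MeasureTheory.IntegrableOn (softMaxLike a) (Set.Ici 0) ∧
      ∫ x in Set.Ici (0 : ℝ), softMaxLike a x =
        (1 / Real.log 2) * Real.log (∑ i, Real.exp (-a i)) := by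
  have : Nonempty (Fin K) := ⟨⟨0, hK⟩⟩
  have hpos' : ∀ i, i ≠ ⟨0, hK⟩ → 0 < a i := fun i hi =>
    hpos i (Nat.one_le_iff_ne_zero.mpr fun h => hi (Fin.ext h))
  have hnonneg : ∀ i, 0 ≤ a i := fun i => by
    by_cases hi : i = ⟨0, hK⟩
    · exact hi ▸ h0.ge
    · exact (hpos' i hi).le
  have hderiv : ∀ x ∈ Set.Ici (0 : ℝ), HasDerivAt (fun y => -Real.log (partitionSum a y) /
      Real.log 2) (softMaxLike a x) x := fun x _ => hasDerivAt_log_partitionSum_div a x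
  have hlim : Tendsto (fun y => -Real.log (partitionSum a y) / Real.log 2) atTop (𝓝 0) := by
    simpa using (((Real.continuousAt_log one_ne_zero).tendsto.comp
      (tendsto_partitionSum_atTop a h0 hpos')).neg).div_const (Real.log 2)
  have hnn : ∀ x ∈ Set.Ioi (0 : ℝ), 0 ≤ softMaxLike a x := fun x _ =>
    softMaxLike_nonneg hnonneg x
  refine ⟨Iff.mpr integrableOn_Ici_iff_integrableOn_Ioi
    (integrableOn_Ioi_deriv_of_nonneg' hderiv hnn hlim), ?_⟩
  rw [integral_Ici_eq_integral_Ioi,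
    integral_Ioi_of_hasDerivAt_of_nonneg' hderiv hnn hlim, partitionSum_zero]
  ring
end

section
/- Let K ≥ 2 and let a_1, …, a_K be real numbers with 0 = a_1 < a_2 ≤ a_3 ≤ ⋯ ≤ a_K. Then ∑_{r=1}^{∞} (∑_{i=1}^{K} 2^r·a_i·exp(−2^r·a_i)) / (∑_{i=1}^{K} exp(−2^r·a_i)) ≤ (1 + 1/log 2)·log K. -/
open Real Finset

section aux

variable {K : ℕ} (hK : 2 ≤ K) (a : Fin K → ℝ)

/-- Jensen step: for any `b`, the softmax-like quantity at `b` is bounded by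
`2 * (log S (b/2) - log S b)` where `S t = ∑ exp (-(t * a i))`. -/
lemma softmax_jensen_step (hK : 2 ≤ K) (a : Fin K → ℝ) (b : ℝ) :
    (∑ i, b * a i * Real.exp (-(b * a i))) / (∑ i, Real.exp (-(b * a i))) ≤
      2 * (Real.log (∑ i, Real.exp (-(b / 2 * a i))) -
           Real.log (∑ i, Real.exp (-(b * a i)))) := by
  have hne : (Finset.univ : Finset (Fin K)).Nonempty := by
    refine ⟨⟨0, by omega⟩, Finset.mem_univ _⟩
  set S : ℝ := ∑ i, Real.exp (-(b * a i)) with hS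
  set S' : ℝ := ∑ i, Real.exp (-(b / 2 * a i)) with hS'
  have hSpos : 0 < S := Finset.sum_pos (fun i _ => Real.exp_pos _) hne
  have hS'pos : 0 < S' := Finset.sum_pos (fun i _ => Real.exp_pos _) hne
  -- weights
  set w : Fin K → ℝ := fun i => Real.exp (-(b * a i)) / S with hw
  have hw0 : ∀ i ∈ Finset.univ, (0:ℝ) ≤ w i :=
    fun i _ => div_nonneg (Real.exp_pos _).le hSpos.le
  have hw1 : ∑ i, w i = 1 := by
    rw [← Finset.sum_div]; exact div_self hSpos.ne'
  have jensen := convexOn_exp.map_sum_le (t := Finset.univ) (p := fun i => b / 2 * a i)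
      hw0 hw1 (fun i _ => Set.mem_univ _)
  -- RHS of Jensen equals S' / S
  have hrhs : ∑ i, w i • Real.exp (b / 2 * a i) = S' / S := by
    rw [hS', Finset.sum_div]
    refine Finset.sum_congr rfl fun i _ => ?_
    rw [smul_eq_mul, hw, div_mul_eq_mul_div, ← Real.exp_add]
    ring_nf
  rw [hrhs] at jensen
  have hlog : ∑ i, w i • (b / 2 * a i) ≤ Real.log (S' / S) := by
    have := Real.exp_le_exp.mpr (le_refl (∑ i, w i • (b / 2 * a i)))
    calc ∑ i, w i • (b / 2 * a i)
        = Real.log (Real.exp (∑ i, w i • (b / 2 * a i))) := (Real.log_exp _).symm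
      _ ≤ Real.log (S' / S) := Real.log_le_log (Real.exp_pos _) jensen
  rw [Real.log_div hS'pos.ne' hSpos.ne'] at hlog
  have hlhs : (∑ i, b * a i * Real.exp (-(b * a i))) / S
      = 2 * ∑ i, w i • (b / 2 * a i) := by
    rw [Finset.mul_sum, Finset.sum_div]
    refine Finset.sum_congr rfl fun i _ => ?_
    rw [smul_eq_mul, hw]
    field_simp
  rw [hlhs]
  linarith

end aux

/-- If `0 = a 1 < a 2 ≤ ⋯ ≤ a K` (1-based indices), then
`∑_{r=1}^∞ (∑ i, 2^r * a i * exp(-2^r * a i)) / (∑ i, exp(-2^r * a i)) ≤ (1 + 1/log 2) * log K`. -/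
theorem tsum_softMaxLike_le (K : ℕ) (hK : 2 ≤ K) (a : Fin K → ℝ)
    (h0 : a ⟨0, by omega⟩ = 0) (h1 : 0 < a ⟨1, hK⟩)
    (hmono : ∀ i j : Fin K, 1 ≤ (i : ℕ) → i ≤ j → a i ≤ a j) :
    (∑' r : ℕ,
        (∑ i, (2 : ℝ) ^ (r + 1) * a i * Real.exp (-((2 : ℝ) ^ (r + 1) * a i))) /
          (∑ i, Real.exp (-((2 : ℝ) ^ (r + 1) * a i)))) ≤
      (1 + 1 / Real.log 2) * Real.log K := by
  have hne : (Finset.univ : Finset (Fin K)).Nonempty := ⟨⟨0, by omega⟩, Finset.mem_univ _⟩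
  -- nonnegativity of a
  have ha : ∀ i : Fin K, 0 ≤ a i := by
    intro i
    rcases Nat.eq_zero_or_pos i.val with h | h
    · have : i = ⟨0, by omega⟩ := Fin.ext h
      rw [this, h0]
    · have : a ⟨1, hK⟩ ≤ a i := hmono ⟨1, hK⟩ i (le_refl 1) (by
        show (1 : ℕ) ≤ i.val; omega)
      linarith
  set f : ℕ → ℝ := fun r =>
    (∑ i, (2 : ℝ) ^ (r + 1) * a i * Real.exp (-((2 : ℝ) ^ (r + 1) * a i))) /
      (∑ i, Real.exp (-((2 : ℝ) ^ (r + 1) * a i))) with hf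
  set S : ℝ → ℝ := fun t => ∑ i, Real.exp (-(t * a i)) with hSdef
  have hSpos : ∀ t, 0 < S t := fun t => Finset.sum_pos (fun i _ => Real.exp_pos _) hne
  have hS1 : ∀ t, 0 ≤ t → 1 ≤ S t := by
    intro t ht
    have : Real.exp (-(t * a ⟨0, by omega⟩)) ≤ S t :=
      Finset.single_le_sum (f := fun i => Real.exp (-(t * a i)))
        (fun i _ => (Real.exp_pos _).le) (Finset.mem_univ _)
    rwa [h0, mul_zero, neg_zero, Real.exp_zero] at this
  have hfnonneg : ∀ r, 0 ≤ f r := by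
    intro r
    apply div_nonneg _ (hSpos ((2:ℝ)^(r+1))).le
    apply Finset.sum_nonneg
    intro i _
    exact mul_nonneg (mul_nonneg (by positivity) (ha i)) (Real.exp_pos _).le
  -- each term bounded by telescoping difference of g r = log (S (2^r))
  set g : ℕ → ℝ := fun r => Real.log (S ((2:ℝ)^r)) with hg
  have hstep : ∀ r : ℕ, f r ≤ 2 * (g r - g (r+1)) := by
    intro r
    have h := softmax_jensen_step hK a ((2:ℝ)^(r+1))
    have h2 : (2:ℝ)^(r+1) / 2 = (2:ℝ)^r := by
      rw [pow_succ]; ring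
    rw [h2] at h
    exact h
  have hg0 : g 0 ≤ Real.log K := by
    have hle : S ((2:ℝ)^0) ≤ (K : ℝ) := by
      calc S ((2:ℝ)^0) = ∑ i, Real.exp (-(1 * a i)) := by norm_num [hSdef]
        _ ≤ ∑ _i : Fin K, (1:ℝ) := by
            apply Finset.sum_le_sum
            intro i _
            rw [Real.exp_le_one_iff]
            have := ha i; linarith
        _ = (K : ℝ) := by simp
    exact Real.log_le_log (hSpos _) hle
  have hgnonneg : ∀ r, 0 ≤ g r := fun r =>
    Real.log_nonneg (hS1 _ (by positivity))
  have hpartial : ∀ n, ∑ r ∈ Finset.range n, f r ≤ 2 * Real.log K := by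
    intro n
    calc ∑ r ∈ Finset.range n, f r ≤ ∑ r ∈ Finset.range n, 2 * (g r - g (r+1)) :=
          Finset.sum_le_sum fun r _ => hstep r
      _ = 2 * (g 0 - g n) := by rw [← Finset.mul_sum, Finset.sum_range_sub' g]
      _ ≤ 2 * Real.log K := by
          have := hgnonneg n; nlinarith
  have htsum : (∑' r, f r) ≤ 2 * Real.log K :=
    Real.tsum_le_of_sum_range_le hfnonneg hpartial
  -- conclude
  have hlog2 : 0 < Real.log 2 := Real.log_pos (by norm_num)
  have hlog2le : Real.log 2 ≤ 1 := by
    have := Real.log_le_sub_one_of_pos (x := 2) (by norm_num)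
    linarith
  have hlogK : Real.log 2 ≤ Real.log K := by
    apply Real.log_le_log (by norm_num)
    exact_mod_cast hK
  have hfinal : 2 * Real.log K ≤ (1 + 1 / Real.log 2) * Real.log K := by
    have h1le : (1:ℝ) ≤ 1 / Real.log 2 := by
      rw [le_div_iff₀ hlog2]; linarith
    nlinarith [hlog2.le, hlogK]
  calc (∑' r, f r) ≤ 2 * Real.log K := htsum
    _ ≤ _ := hfinal
end

section
/- Let K > 5 be an integer and M ≥ 1 a real number. For each l ∈ {1,…,K}, let p^{(l)} be a probability distribution on {1,…,K} (with indices taken cyclically modulo K), and suppose that p^{(l)}(i) ≤ M·p^{(l')}(i) for all l, l', i ∈ {1,…,K}. Then ∑_{l=1}^{K} (1 − p^{(l)}({l−1, l, l+1})) ≥ K·(K−5)/(3M + K − 5). -/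
/-!
Write `N l = {l - 1, l, l + 1}` and `q l = p l (N l)`. If `i ∈ N l` and `l'` is one of the
`K - 3` indices with `i ∉ N l'`, closeness gives `p l i ≤ M * p l' i`. Summing over all such
triples and double counting through the symmetry `i ∈ N l ↔ l ∈ N i` (so every `i` lies in exactly
three neighbourhoods) gives `(K - 3) * ∑ q ≤ 3 * M * ∑ (1 - q)`, which rearranges to the bound.
-/

open Finset

section DoubleCounting

variable {ι : Type*} {s : Finset ι}

theorem sum_sum_comm_of_mem_iff {β : Type*} [AddCommMonoid β] (T : ι → Finset ι)
    (hT : ∀ l ∈ s, T l ⊆ s) (hsymm : ∀ l ∈ s, ∀ i ∈ s, i ∈ T l ↔ l ∈ T i) (f : ι → ι → β) :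
    ∑ l ∈ s, ∑ i ∈ T l, f l i = ∑ i ∈ s, ∑ l ∈ T i, f l i :=
  sum_comm' fun l i =>
    ⟨fun ⟨hl, hi⟩ => ⟨(hsymm l hl i (hT l hl hi)).1 hi, hT l hl hi⟩,
      fun ⟨hl, hi⟩ => ⟨hT i hi hl, (hsymm l (hT i hi hl) i hi).2 hl⟩⟩

variable [DecidableEq ι]

theorem sub_card_mul_sum_nbhd_mass_le (N : ι → Finset ι) (c : ℕ) (hN : ∀ l ∈ s, N l ⊆ s)
    (hcard : ∀ l ∈ s, #(N l) = c) (hsymm : ∀ l ∈ s, ∀ i ∈ s, i ∈ N l ↔ l ∈ N i)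
    (p : ι → ι → ℝ) (M : ℝ) (hsum : ∀ l ∈ s, ∑ i ∈ s, p l i = 1)
    (hclose : ∀ l ∈ s, ∀ l' ∈ s, ∀ i ∈ s, p l i ≤ M * p l' i) :
    ((#s : ℝ) - c) * ∑ l ∈ s, ∑ i ∈ N l, p l i ≤
      c * M * ∑ l ∈ s, (1 - ∑ i ∈ N l, p l i) := by
  have hsymm_compl : ∀ l ∈ s, ∀ i ∈ s, i ∈ s \ N l ↔ l ∈ s \ N i := fun l hl i hi => by
    simp only [mem_sdiff, hl, hi, hsymm l hl i hi, true_and]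
  have hcard_compl : ∀ i ∈ s, (#(s \ N i) : ℝ) = #s - c := fun i hi => by
    rw [card_sdiff_of_subset (hN i hi), hcard i hi,
      Nat.cast_sub (hcard i hi ▸ card_le_card (hN i hi))]
  have hmass_compl : ∀ l ∈ s, ∑ i ∈ s \ N l, p l i = 1 - ∑ i ∈ N l, p l i := fun l hl => by
    rw [sum_sdiff_eq_sub (hN l hl), hsum l hl]
  calc ((#s : ℝ) - c) * ∑ l ∈ s, ∑ i ∈ N l, p l i
      = ∑ l ∈ s, ∑ i ∈ N l, ∑ _l' ∈ s \ N i, p l i := by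
        simp only [mul_sum]
        refine sum_congr rfl fun l hl => sum_congr rfl fun i hi => ?_
        rw [sum_const, nsmul_eq_mul, hcard_compl i (hN l hl hi)]
    _ ≤ ∑ l ∈ s, ∑ i ∈ N l, M * ∑ l' ∈ s \ N i, p l' i := by
        simp only [mul_sum]
        refine sum_le_sum fun l hl => sum_le_sum fun i hi => sum_le_sum fun l' hl' => ?_
        exact hclose l hl l' (mem_sdiff.1 hl').1 i (hN l hl hi)
    _ = ∑ i ∈ s, ∑ _l ∈ N i, M * ∑ l' ∈ s \ N i, p l' i := sum_sum_comm_of_mem_iff N hN hsymm _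
    _ = c * M * ∑ i ∈ s, ∑ l ∈ s \ N i, p l i := by
        rw [mul_sum]
        refine sum_congr rfl fun i hi => ?_
        rw [sum_const, hcard i hi, nsmul_eq_mul, mul_assoc]
    _ = c * M * ∑ l ∈ s, (1 - ∑ i ∈ N l, p l i) := by
        rw [← sum_congr rfl hmass_compl,
          sum_sum_comm_of_mem_iff (fun l => s \ N l) (fun _ _ => sdiff_subset) hsymm_compl]

end DoubleCounting

section Cyclic

variable {K l : ℕ}

theorem add_sub_one_mod_eq_ite (hl : l < K) :
    (l + K - 1) % K = if l = 0 then K - 1 else l - 1 := by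
  split_ifs with h
  · rw [h, zero_add, Nat.mod_eq_of_lt (by omega)]
  · rw [show l + K - 1 = l - 1 + K by omega, Nat.add_mod_right, Nat.mod_eq_of_lt (by omega)]

theorem add_one_mod_eq_ite (hl : l < K) : (l + 1) % K = if l + 1 = K then 0 else l + 1 := by
  split_ifs with h
  · rw [h, Nat.mod_self]
  · exact Nat.mod_eq_of_lt (by omega)

def cyclicNbhd (K l : ℕ) : Finset ℕ := {(l + K - 1) % K, l, (l + 1) % K}

theorem cyclicNbhd_subset_range (hl : l < K) : cyclicNbhd K l ⊆ range K := by
  simp [cyclicNbhd, insert_subset_iff, Nat.mod_lt _ (pos_of_gt hl), hl]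

theorem mem_cyclicNbhd_comm {i : ℕ} (hl : l < K) (hi : i < K) :
    i ∈ cyclicNbhd K l ↔ l ∈ cyclicNbhd K i := by
  simp only [cyclicNbhd, mem_insert, mem_singleton, add_sub_one_mod_eq_ite hl,
    add_sub_one_mod_eq_ite hi, add_one_mod_eq_ite hl, add_one_mod_eq_ite hi]
  split_ifs <;> omega

theorem cyclic_neighbours_ne (hK : 3 ≤ K) (hl : l < K) :
    (l + K - 1) % K ≠ l ∧ (l + K - 1) % K ≠ (l + 1) % K ∧ l ≠ (l + 1) % K := by
  rw [add_sub_one_mod_eq_ite hl, add_one_mod_eq_ite hl]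
  split_ifs <;> omega

theorem card_cyclicNbhd (hK : 3 ≤ K) (hl : l < K) : #(cyclicNbhd K l) = 3 :=
  have ⟨h₁, h₂, h₃⟩ := cyclic_neighbours_ne hK hl
  card_eq_three.2 ⟨_, _, _, h₁, h₂, h₃, rfl⟩

theorem sum_cyclicNbhd {β : Type*} [AddCommMonoid β] (hK : 3 ≤ K) (hl : l < K) (f : ℕ → β) :
    ∑ i ∈ cyclicNbhd K l, f i = f ((l + K - 1) % K) + f l + f ((l + 1) % K) := by
  obtain ⟨h₁, h₂, h₃⟩ := cyclic_neighbours_ne hK hl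
  rw [cyclicNbhd, sum_insert (by simp [h₁, h₂]), sum_pair h₃, add_assoc]

end Cyclic

theorem privacy_lower_bound_counting_general (K : ℕ) (hK : 5 < K) (M : ℝ) (hM : 1 ≤ M)
    (p : ℕ → ℕ → ℝ)
    (hsum : ∀ l, l < K → ∑ i ∈ Finset.range K, p l i = 1)
    (hclose : ∀ l l' i, l < K → l' < K → i < K → p l i ≤ M * p l' i) :
    ∑ l ∈ Finset.range K, (1 - (p l ((l + K - 1) % K) + p l l + p l ((l + 1) % K))) ≥
      (K : ℝ) * ((K : ℝ) - 5) / (3 * M + (K : ℝ) - 5) := by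
  have key := sub_card_mul_sum_nbhd_mass_le (s := range K) (cyclicNbhd K) 3
    (fun l hl => cyclicNbhd_subset_range (mem_range.1 hl))
    (fun l hl => card_cyclicNbhd (by omega) (mem_range.1 hl))
    (fun l hl i hi => mem_cyclicNbhd_comm (mem_range.1 hl) (mem_range.1 hi)) p M
    (fun l hl => hsum l (mem_range.1 hl))
    (fun l hl l' hl' i hi => hclose l l' i (mem_range.1 hl) (mem_range.1 hl') (mem_range.1 hi))
  set q : ℕ → ℝ := fun l => p l ((l + K - 1) % K) + p l l + p l ((l + 1) % K)
  have hq : ∀ l ∈ range K, ∑ i ∈ cyclicNbhd K l, p l i = q l := fun l hl =>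
    sum_cyclicNbhd (by omega) (mem_range.1 hl) (p l)
  have hmiss : ∑ l ∈ range K, (1 - q l) = K - ∑ l ∈ range K, q l := by
    rw [sum_sub_distrib, sum_const, card_range, nsmul_one]
  rw [card_range, sum_congr rfl hq, sum_congr rfl fun l hl => congrArg (1 - ·) (hq l hl),
    hmiss, Nat.cast_ofNat] at key
  have hK6 : (6 : ℝ) ≤ K := by exact_mod_cast hK
  -- With `U` the missed mass, `key` says `U ≥ K (K - 3) / (3M + K - 3)`,
  -- and `(K - 3) / (3M + K - 3) ≥ (K - 5) / (3M + K - 5)`.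
  rw [hmiss, ge_iff_le, div_le_iff₀ (by linarith)]
  nlinarith [mul_le_mul_of_nonneg_left key (by linarith : (0 : ℝ) ≤ 3 * M + K - 5),
    mul_nonneg (by linarith : (0 : ℝ) ≤ M) (by linarith : (0 : ℝ) ≤ K)]

/-- The counting step in the privacy lower bound. Actions are indexed by `{0, ..., K-1}` with
cyclic indices (modulo `K`): if `K > 5` probability distributions `p l` on `{0, ..., K-1}` are
pairwise multiplicatively `M`-close, then the total probability of missing the three indices
`{l-1, l, l+1}` is at least `K(K-5)/(3M + K - 5)`. -/
theorem privacy_lower_bound_counting (K : ℕ) (hK : 5 < K) (M : ℝ) (hM : 1 ≤ M)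
    (p : ℕ → ℕ → ℝ)
    (hnn : ∀ l i, l < K → i < K → 0 ≤ p l i)
    (hsum : ∀ l, l < K → ∑ i ∈ Finset.range K, p l i = 1)
    (hclose : ∀ l l' i, l < K → l' < K → i < K → p l i ≤ M * p l' i) :
    ∑ l ∈ Finset.range K, (1 - (p l ((l + K - 1) % K) + p l l + p l ((l + 1) % K))) ≥
      (K : ℝ) * ((K : ℝ) - 5) / (3 * M + (K : ℝ) - 5) :=
  privacy_lower_bound_counting_general K hK M hM p hsum hclose
end

section
/- For all real ε > 0, every integer K > 5, and every integer T ≥ 1, ∑_{t=1}^{T} (K−5)/(3·e^{tε} + K − 5) ≥ (1/ε)·log( (e^{(T+1)ε}/(3·e^{(T+1)ε} + K − 5)) · ((3·e^{ε} + K − 5)/e^{ε}) ). -/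
/-!
The summand `t ↦ c / (a e^{tε} + c)` is decreasing in `t` and has the explicit antiderivative
`t ↦ (1/ε) log (e^{tε} / (a e^{tε} + c))`, so the sum over `t = 1, …, T` dominates the integral
over `[1, T + 1]`, which is the difference of the antiderivative at the endpoints.
-/

open Real Finset

lemma sub_le_sum_of_hasDerivAt_of_antitone {f F : ℝ → ℝ} (hf : Antitone f)
    (hF : ∀ x, HasDerivAt F (f x) x) (x₀ : ℝ) (n : ℕ) :
    F (x₀ + n) - F x₀ ≤ ∑ i ∈ range n, f (x₀ + i) := by
  rw [← intervalIntegral.integral_eq_sub_of_hasDerivAt (fun x _ ↦ hF x) hf.intervalIntegrable]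
  exact (hf.antitoneOn _).integral_le_sum

section ExpRatio

variable {a c ε : ℝ}

lemma antitone_div_mul_exp_add (ha : 0 ≤ a) (hc : 0 < c) (hε : 0 ≤ ε) :
    Antitone fun t : ℝ ↦ c / (a * exp (t * ε) + c) := by
  intro s t hst
  dsimp only
  gcongr

lemma hasDerivAt_log_exp_div_mul_exp_add (ha : 0 ≤ a) (hc : 0 < c) (hε : ε ≠ 0) (t : ℝ) :
    HasDerivAt (fun t : ℝ ↦ (1 / ε) * log (exp (t * ε) / (a * exp (t * ε) + c)))
      (c / (a * exp (t * ε) + c)) t := by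
  have hexp : HasDerivAt (fun t : ℝ ↦ exp (t * ε)) (exp (t * ε) * ε) t := by
    simpa using ((hasDerivAt_id t).mul_const ε).exp
  have hden : 0 < a * exp (t * ε) + c := by positivity
  have hquot : HasDerivAt (fun t : ℝ ↦ exp (t * ε) / (a * exp (t * ε) + c)) _ t :=
    hexp.div (hexp.const_mul a |>.add_const c) hden.ne'
  refine ((hquot.log (div_pos (exp_pos _) hden).ne').const_mul (1 / ε)).congr_deriv ?_
  field_simp
  ring

end ExpRatio

theorem privacy_lower_bound_sum_general (ε : ℝ) (hε : 0 < ε) (K : ℕ) (hK : 5 < K)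
    (T : ℕ) :
    ∑ t ∈ Finset.Icc 1 T, ((K : ℝ) - 5) / (3 * Real.exp (t * ε) + (K : ℝ) - 5) ≥
      (1 / ε) * Real.log
        ((Real.exp (((T : ℝ) + 1) * ε) / (3 * Real.exp (((T : ℝ) + 1) * ε) + (K : ℝ) - 5)) *
          ((3 * Real.exp ε + (K : ℝ) - 5) / Real.exp ε)) := by
  set c : ℝ := (K : ℝ) - 5
  have hc : 0 < c := by simp only [c, sub_pos]; exact_mod_cast hK
  set F : ℝ → ℝ := fun t ↦ (1 / ε) * log (exp (t * ε) / (3 * exp (t * ε) + c))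
  have hRHS : (1 / ε) * log ((exp ((T + 1) * ε) / (3 * exp ((T + 1) * ε) + c)) *
      ((3 * exp ε + c) / exp ε)) = F (1 + T) - F 1 := by
    have hpos : ∀ t, 0 < exp (t * ε) / (3 * exp (t * ε) + c) := fun t ↦ by positivity
    have hinv : (3 * exp ε + c) / exp ε = (exp (1 * ε) / (3 * exp (1 * ε) + c))⁻¹ := by
      rw [one_mul, inv_div]
    rw [hinv, log_mul (hpos _).ne' (inv_pos.2 (hpos 1)).ne', log_inv]
    simp only [F]
    ring_nf
  simp only [add_sub_assoc, ge_iff_le]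
  rw [hRHS, ← Ico_add_one_right_eq_Icc, sum_Ico_eq_sum_range, add_tsub_cancel_right]
  push_cast
  exact sub_le_sum_of_hasDerivAt_of_antitone (antitone_div_mul_exp_add zero_le_three hc hε.le)
    (hasDerivAt_log_exp_div_mul_exp_add zero_le_three hc hε.ne') 1 T

/-- The summation step in the privacy lower bound: comparison of the sum
`∑_{t=1}^T (K-5)/(3e^{tε} + K - 5)` with the corresponding integral. -/
theorem privacy_lower_bound_sum (ε : ℝ) (hε : 0 < ε) (K : ℕ) (hK : 5 < K)
    (T : ℕ) (hT : 1 ≤ T) :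
    ∑ t ∈ Finset.Icc 1 T, ((K : ℝ) - 5) / (3 * Real.exp (t * ε) + (K : ℝ) - 5) ≥
      (1 / ε) * Real.log
        ((Real.exp (((T : ℝ) + 1) * ε) / (3 * Real.exp (((T : ℝ) + 1) * ε) + (K : ℝ) - 5)) *
          ((3 * Real.exp ε + (K : ℝ) - 5) / Real.exp ε)) :=
  privacy_lower_bound_sum_general ε hε K hK T
end

section
/- For all real ε > 0 and every integer K > 5, ∑_{t=1}^{∞} (K−5)/(3·e^{tε} + K − 5) ≥ log(e^{ε} + (K−5)/3)/ε − 1 ≥ log((K−5)/3)/ε − 1. -/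
/-!
With `c = (K - 5) / 3` the summand is `c / (e^{tε} + c)`, decreasing in `t`, so the series dominates
`∫_1^∞ c / (e^{tε} + c) dt = log (1 + c e^{-ε}) / ε = log (e^ε + c) / ε - 1`.
Discretely: for `G s = log (e^s + c) - s = log (1 + c e^{-s})`, convexity of `exp` gives
`G s - G (s + ε) ≤ ε c / (e^s + c)`, and these increments telescope to `G ε` because `G s → 0`.
-/

open Real Filter Topology Finset

theorem le_tsum_of_sub_succ_le {α : Type*} [AddCommGroup α] [PartialOrder α]
    [IsOrderedAddMonoid α] [TopologicalSpace α] [IsTopologicalAddGroup α] [OrderClosedTopology α]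
    {f g : ℕ → α} (hf : Summable f) (hg : Tendsto g atTop (𝓝 0)) (h : ∀ n, g n - g (n + 1) ≤ f n) :
    g 0 ≤ ∑' n, f n := by
  refine le_of_tendsto_of_tendsto' (by simpa using tendsto_const_nhds.sub hg)
    hf.hasSum.tendsto_sum_nat fun N => ?_
  rw [← sum_range_sub']
  exact sum_le_sum fun n _ => h n

namespace Real

theorem mul_div_le_log_mul_exp_add_sub_log {a c : ℝ} (ha : 0 < a) (hc : 0 ≤ c) (x : ℝ) :
    x * (a / (a + c)) ≤ log (a * exp x + c) - log (a + c) := by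
  have hac : 0 < a + c := by positivity
  have hw : a / (a + c) ≤ 1 := (div_le_one hac).2 (by linarith)
  have hchord : exp (a / (a + c) * x) ≤ (a * exp x + c) / (a + c) := by
    have := convexOn_exp.2 (Set.mem_univ x) (Set.mem_univ 0) (by positivity) (sub_nonneg.2 hw)
      (add_sub_cancel _ _)
    simp only [smul_eq_mul, mul_zero, add_zero, exp_zero, mul_one] at this
    calc _ ≤ _ := this
      _ = _ := by field_simp; ring
  rw [← log_le_log_iff (exp_pos _) (by positivity), log_exp,
    log_div (by positivity) hac.ne'] at hchord
  linarith

theorem log_exp_add_sub_sub_le {c : ℝ} (hc : 0 ≤ c) (s ε : ℝ) :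
    (log (exp s + c) - s) - (log (exp (s + ε) + c) - (s + ε)) ≤ ε * (c / (exp s + c)) := by
  have hconv := mul_div_le_log_mul_exp_add_sub_log (exp_pos s) hc ε
  rw [← exp_add] at hconv
  have hsplit : c / (exp s + c) = 1 - exp s / (exp s + c) := by
    field_simp; ring
  rw [hsplit]
  linarith

theorem tendsto_log_exp_add_sub_atTop {c : ℝ} (hc : 0 ≤ c) :
    Tendsto (fun s => log (exp s + c) - s) atTop (𝓝 0) := by
  have hlog : ∀ s, log (exp s + c) - s = log (1 + c * exp (-s)) := by
    intro s
    rw [← log_exp s, ← log_div (by positivity) (exp_pos s).ne', log_exp, add_div,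
      div_self (exp_pos s).ne', exp_neg, div_eq_mul_inv]
  simp_rw [hlog]
  have : Tendsto (fun s => 1 + c * exp (-s)) atTop (𝓝 1) := by
    simpa using (tendsto_exp_neg_atTop_nhds_zero.const_mul c).const_add 1
  rw [← log_one]
  exact (continuousAt_log one_ne_zero).tendsto.comp this

theorem summable_div_exp_add {c ε : ℝ} (hc : 0 ≤ c) (hε : 0 < ε) :
    Summable fun n : ℕ => c / (exp ((n + 1) * ε) + c) := by
  refine ((summable_exp_nat_mul_iff.2 (neg_lt_zero.2 hε)).mul_left c).of_nonneg_of_le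
    (fun n => by positivity) fun n => ?_
  calc c / (exp ((n + 1) * ε) + c) ≤ c / exp ((n + 1) * ε) := by
        gcongr; linarith
    _ = c * exp (-((n + 1) * ε)) := by rw [exp_neg, div_eq_mul_inv]
    _ ≤ c * exp (n * -ε) := by gcongr; nlinarith

end Real

/-- The `Ω((log K)/ε)` lower bound as the time horizon tends to infinity:
`∑_{t=1}^∞ (K-5)/(3e^{tε} + K - 5) ≥ log(e^ε + (K-5)/3)/ε - 1 ≥ log((K-5)/3)/ε - 1`. -/
theorem privacy_lower_bound_tsum (ε : ℝ) (hε : 0 < ε) (K : ℕ) (hK : 5 < K) :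
    (∑' t : ℕ, ((K : ℝ) - 5) / (3 * Real.exp (((t : ℝ) + 1) * ε) + (K : ℝ) - 5)) ≥
        Real.log (Real.exp ε + ((K : ℝ) - 5) / 3) / ε - 1 ∧
      Real.log (Real.exp ε + ((K : ℝ) - 5) / 3) / ε - 1 ≥
        Real.log (((K : ℝ) - 5) / 3) / ε - 1 := by
  have hK' : (5 : ℝ) < K := by exact_mod_cast hK
  set c : ℝ := ((K : ℝ) - 5) / 3
  have hc : 0 < c := by positivity
  have hterm (t : ℕ) : ((K : ℝ) - 5) / (3 * exp ((t + 1) * ε) + K - 5)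
      = c / (exp ((t + 1) * ε) + c) := by
    rw [div_eq_div_iff (by linarith [exp_pos ((t + 1) * ε)]) (by positivity)]
    ring
  let g : ℕ → ℝ := fun n => (log (exp ((n + 1) * ε) + c) - (n + 1) * ε) / ε
  have hg0 : g 0 = log (exp ε + c) / ε - 1 := by
    simp [g, sub_div, hε.ne']
  have hstep (n : ℕ) : g n - g (n + 1) ≤ c / (exp ((n + 1) * ε) + c) := by
    set s : ℝ := (n + 1) * ε
    calc g n - g (n + 1) = ((log (exp s + c) - s) - (log (exp (s + ε) + c) - (s + ε))) / ε := by
          simp only [g, s]; push_cast; ring_nf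
      _ ≤ c / (exp s + c) := (div_le_iff₀' hε).2 (log_exp_add_sub_sub_le hc.le s ε)
  have hlim : Tendsto g atTop (𝓝 0) := by
    have hs : Tendsto (fun n : ℕ => ((n : ℝ) + 1) * ε) atTop atTop :=
      (tendsto_natCast_atTop_atTop.atTop_add tendsto_const_nhds).atTop_mul_const hε
    simpa using ((tendsto_log_exp_add_sub_atTop hc.le).comp hs).div_const ε
  simp_rw [hterm]
  refine ⟨hg0 ▸ le_tsum_of_sub_succ_le (summable_div_exp_add hc.le hε) hlim hstep, ?_⟩
  gcongr
  linarith [exp_pos ε]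
end
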